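/- arXiv:1611.04956 — 11 statements merged into one kernel-verified Lean document; each statement's English description precedes it below -/
import Mathlib

section
/- Let m,n be coprime positive integers and let π be an (m,n)-Dyck path. A cell (x,y) above π lies in Dinv(π) if and only if γ[(x,y)^→] > γ[(x,y)^⇓] and γ[(x,y)^↓] > γ[(x,y)^⇒]. -/
open scoped Classical

noncomputable section

/-- The rank of cell `(u,v)` in the `(m,n)`-diagram: `γ(u,v) = mn − un − (n+1−v)m`. -/
def rk (m n : ℕ) (u v : ℤ) : ℤ := (m : ℤ) * n - u * n - ((n : ℤ) + 1 - v) * m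

/-- The cells `(u,v)`, `1 ≤ u ≤ m`, `1 ≤ v ≤ n`, of the `(m,n)`-diagram. -/
def cells (m n : ℕ) : Finset (ℤ × ℤ) := Finset.Icc 1 (m : ℤ) ×ˢ Finset.Icc 1 (n : ℤ)

/-- `A` is the set of cells lying above some `(m,n)`-Dyck path: a northwest-closed set of
cells of the diagram, each lying strictly above the diagonal `y = (n/m)x`. -/
def IsDyckPath (m n : ℕ) (A : Finset (ℤ × ℤ)) : Prop :=
  A ⊆ cells m n ∧
  (∀ c ∈ A, 0 < (c.2 - 1) * (m : ℤ) - c.1 * n) ∧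
  (∀ c ∈ A, ∀ x y : ℤ, 1 ≤ x → x ≤ c.1 → c.2 ≤ y → y ≤ (n : ℤ) → (x, y) ∈ A)

/-- `arm(c)`: the number of cells above the path strictly east of `c` in its row. -/
def armOf (A : Finset (ℤ × ℤ)) (c : ℤ × ℤ) : ℕ :=
  (A.filter fun d => d.2 = c.2 ∧ c.1 < d.1).card

/-- `leg(c)`: the number of cells above the path strictly south of `c` in its column. -/
def legOf (A : Finset (ℤ × ℤ)) (c : ℤ × ℤ) : ℕ :=
  (A.filter fun d => d.1 = c.1 ∧ d.2 < c.2).card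

/-- `Dinv(π)`: cells above the path with `arm/(leg+1) < m/n < (arm+1)/leg`
(stated cross-multiplied, so that division by zero is `+∞`). -/
def dinvSet (m n : ℕ) (A : Finset (ℤ × ℤ)) : Finset (ℤ × ℤ) :=
  A.filter fun c =>
    (armOf A c : ℤ) * n < m * ((legOf A c : ℤ) + 1) ∧
    (m : ℤ) * (legOf A c : ℤ) < n * ((armOf A c : ℤ) + 1)

/-- `Skips(π)`: cells above the path not in `Dinv(π)`. -/
def skipsSet (m n : ℕ) (A : Finset (ℤ × ℤ)) : Finset (ℤ × ℤ) :=
  A.filter fun c => c ∉ dinvSet m n A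

/-- `Area(π)`: cells of the diagram below the path having positive rank. -/
def areaSet (m n : ℕ) (A : Finset (ℤ × ℤ)) : Finset (ℤ × ℤ) :=
  (cells m n).filter fun c => 0 < rk m n c.1 c.2 ∧ c ∉ A

def area (m n : ℕ) (A : Finset (ℤ × ℤ)) : ℕ := (areaSet m n A).card
def dinv (m n : ℕ) (A : Finset (ℤ × ℤ)) : ℕ := (dinvSet m n A).card
def skips (m n : ℕ) (A : Finset (ℤ × ℤ)) : ℕ := (skipsSet m n A).card

/-- The set of all `(m,n)`-Dyck paths (each identified with its set of cells above the path). -/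
def dyckPaths (m n : ℕ) : Finset (Finset (ℤ × ℤ)) :=
  (cells m n).powerset.filter (IsDyckPath m n)

/-- The letters of the `(m,n)`-word, encoded as the pairs `(k, ℓ)` with `k, ℓ ≥ 1` and
rank `mn − km − ℓn > 0`; the color of the letter `(k, ℓ)` is `ℓ`. -/
def letters (m n : ℕ) : Finset (ℤ × ℤ) :=
  (Finset.Icc 1 (n : ℤ) ×ˢ Finset.Icc 1 (m : ℤ)).filter fun p =>
    0 < (m : ℤ) * n - p.1 * m - p.2 * n

/-- The rank `mn − km − ℓn` of the letter `(k, ℓ)`. -/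
def letterRank (m n : ℕ) (p : ℤ × ℤ) : ℤ := (m : ℤ) * n - p.1 * m - p.2 * n

/-- An `(m,n)`-rank word, identified with its set of highlighted letters: if `(k,ℓ)` is
highlighted then so is `(i,j)` for all `1 ≤ i ≤ k`, `1 ≤ j ≤ ℓ`. -/
def IsRankWord (m n : ℕ) (H : Finset (ℤ × ℤ)) : Prop :=
  H ⊆ letters m n ∧
  ∀ p ∈ H, ∀ i j : ℤ, 1 ≤ i → i ≤ p.1 → 1 ≤ j → j ≤ p.2 → (i, j) ∈ H

/-- The set of all `(m,n)`-rank words. -/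
def rankWords (m n : ℕ) : Finset (Finset (ℤ × ℤ)) :=
  (letters m n).powerset.filter (IsRankWord m n)

/-- The Dyck path `Π(w)` associated to a rank word: the cells above the path are exactly the
cells whose rank is a highlighted letter; the letter `(k,ℓ)` corresponds to the unique cell
`(ℓ, n+1−k)` of the diagram having the same rank. -/
def toPath (n : ℕ) (H : Finset (ℤ × ℤ)) : Finset (ℤ × ℤ) :=
  H.image fun p => (p.2, (n : ℤ) + 1 - p.1)

/-- `area(w)`: the number of unhighlighted letters of the rank word. -/
def wordArea (m n : ℕ) (H : Finset (ℤ × ℤ)) : ℕ :=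
  ((letters m n).filter fun p => p ∉ H).card

/-- `S(w)`: ordered pairs of letters `(a_k, b_ℓ)` with `a_k` highlighted, `b_ℓ` not
highlighted, and `a < b`. -/
def wordS (m n : ℕ) (H : Finset (ℤ × ℤ)) : Finset ((ℤ × ℤ) × (ℤ × ℤ)) :=
  (letters m n ×ˢ letters m n).filter fun pq =>
    pq.1 ∈ H ∧ pq.2 ∉ H ∧ letterRank m n pq.1 < letterRank m n pq.2

/-- The relation on `S(w)`: `(a_k,b_ℓ) ∼ (c_r,d_t)` iff (`k = r` and `b ≡ d (mod n)`) or
(`ℓ = t` and `a ≡ c (mod n)`).  (The color of a letter is its second component.) -/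
def wordRel (m n : ℕ) (x y : (ℤ × ℤ) × (ℤ × ℤ)) : Prop :=
  (x.1.2 = y.1.2 ∧ letterRank m n x.2 ≡ letterRank m n y.2 [ZMOD (n : ℤ)]) ∨
  (x.2.2 = y.2.2 ∧ letterRank m n x.1 ≡ letterRank m n y.1 [ZMOD (n : ℤ)])

/-- `skips(w)`: the number of equivalence classes of `S(w)` under the equivalence relation
generated by `wordRel`. -/
def wordSkips (m n : ℕ) (H : Finset (ℤ × ℤ)) : ℕ :=
  Nat.card (Quot fun x y : {p // p ∈ wordS m n H} => wordRel m n x.1 y.1)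

/-- `dinv(w) = (m−1)(n−1)/2 − area(w) − skips(w)`. -/
def wordDinv (m n : ℕ) (H : Finset (ℤ × ℤ)) : ℤ :=
  ((m : ℤ) - 1) * ((n : ℤ) - 1) / 2 - wordArea m n H - wordSkips m n H

/-- The generating function `W_{m,n}(b,q,t) = Σ_w b^{skips(w)} q^{dinv(w)} t^{area(w)}`. -/
def Wgen (m n : ℕ) (b q t : ℚ) : ℚ :=
  ∑ H ∈ rankWords m n, b ^ wordSkips m n H * q ^ wordDinv m n H * t ^ wordArea m n H

/-- The rational `q,t`-Catalan polynomial `C_{m,n}(q,t) = Σ_π q^{dinv(π)} t^{area(π)}`. -/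
def Cqt (m n : ℕ) (q t : ℚ) : ℚ :=
  ∑ A ∈ dyckPaths m n, q ^ dinv m n A * t ^ area m n A

/-- The two-variable Schur polynomial of a two-row partition `(l1, l2)`:
`s_{(l1,l2)}(q,t) = Σ_{j=0}^{l1−l2} q^{l2+j} t^{l1−j}`. -/
def schur2 (l1 l2 : ℕ) (q t : ℚ) : ℚ :=
  ∑ j ∈ Finset.range (l1 - l2 + 1), q ^ (l2 + j) * t ^ (l1 - j)

/-! The arm and leg of a cell are read off from the ends of its row and column, and then
`γ[c^→] - γ[c^⇓] = m (leg c + 1) - n arm c` and `γ[c^↓] - γ[c^⇒] = n (arm c + 1) - m leg c`,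
so the two rank inequalities are the two cross-multiplied `Dinv` inequalities. -/

namespace IsDyckPath

variable {m n : ℕ} {A : Finset (ℤ × ℤ)}

theorem armOf_eq (hA : IsDyckPath m n A) {c r : ℤ × ℤ} (hc : c ∈ A) (hr : r ∈ A)
    (hr2 : r.2 = c.2) (hrmax : ∀ e ∈ A, e.2 = c.2 → e.1 ≤ r.1) :
    (armOf A c : ℤ) = r.1 - c.1 := by
  have hc_cell := hA.1 hc
  simp only [cells, Finset.mem_product, Finset.mem_Icc] at hc_cell
  have hrow : A.filter (fun e => e.2 = c.2 ∧ c.1 < e.1) =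
      (Finset.Ioc c.1 r.1).image (·, c.2) := by
    ext ⟨u, v⟩
    simp only [Finset.mem_filter, Finset.mem_image, Finset.mem_Ioc, Prod.mk.injEq]
    constructor
    · rintro ⟨he, rfl, hlt⟩
      exact ⟨u, ⟨hlt, hrmax _ he rfl⟩, rfl, rfl⟩
    · rintro ⟨u, ⟨hlt, hle⟩, rfl, rfl⟩
      exact ⟨hA.2.2 r hr u c.2 (by omega) hle hr2.le hc_cell.2.2, rfl, hlt⟩
  rw [armOf, hrow, Finset.card_image_of_injective _ (Prod.mk_left_injective c.2), Int.card_Ioc,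
    Int.toNat_of_nonneg (sub_nonneg.2 (hrmax c hc rfl))]

theorem legOf_eq (hA : IsDyckPath m n A) {c d : ℤ × ℤ} (hc : c ∈ A) (hd : d ∈ A)
    (hd1 : d.1 = c.1) (hdmin : ∀ e ∈ A, e.1 = c.1 → d.2 ≤ e.2) :
    (legOf A c : ℤ) = c.2 - d.2 := by
  have hc_cell := hA.1 hc
  simp only [cells, Finset.mem_product, Finset.mem_Icc] at hc_cell
  have hcol : A.filter (fun e => e.1 = c.1 ∧ e.2 < c.2) =
      (Finset.Ico d.2 c.2).image (c.1, ·) := by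
    ext ⟨u, v⟩
    simp only [Finset.mem_filter, Finset.mem_image, Finset.mem_Ico, Prod.mk.injEq]
    constructor
    · rintro ⟨he, rfl, hlt⟩
      exact ⟨v, ⟨hdmin _ he rfl, hlt⟩, rfl, rfl⟩
    · rintro ⟨v, ⟨hle, hlt⟩, rfl, rfl⟩
      exact ⟨hA.2.2 d hd c.1 v hc_cell.1.1 hd1.ge hle (by omega), rfl, hlt⟩
  rw [legOf, hcol, Finset.card_image_of_injective _ (Prod.mk_right_injective c.1), Int.card_Ico,
    Int.toNat_of_nonneg (sub_nonneg.2 (hdmin c hc rfl))]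

end IsDyckPath

/-- Here `r = (x,y)^→` and `d = (x,y)^↓`, so that `(x,y)^⇒ = (r.1 + 1, y)` and
`(x,y)^⇓ = (x, d.2 - 1)`. -/
theorem stmt0_general (m n : ℕ)
    (A : Finset (ℤ × ℤ)) (hA : IsDyckPath m n A) (c : ℤ × ℤ) (hc : c ∈ A)
    (r : ℤ × ℤ) (hr : r ∈ A) (hr2 : r.2 = c.2) (hrmax : ∀ e ∈ A, e.2 = c.2 → e.1 ≤ r.1)
    (d : ℤ × ℤ) (hd : d ∈ A) (hd1 : d.1 = c.1) (hdmin : ∀ e ∈ A, e.1 = c.1 → d.2 ≤ e.2) :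
    c ∈ dinvSet m n A ↔
      rk m n r.1 c.2 > rk m n c.1 (d.2 - 1) ∧ rk m n c.1 d.2 > rk m n (r.1 + 1) c.2 := by
  rw [dinvSet, Finset.mem_filter, hA.armOf_eq hc hr hr2 hrmax, hA.legOf_eq hc hd hd1 hdmin]
  simp only [hc, true_and, rk, gt_iff_lt]
  constructor <;> rintro ⟨h1, h2⟩ <;> constructor <;> linarith

/-- **Fast dinv.**  Let `m,n` be coprime positive integers, `π` an `(m,n)`-Dyck path and
`c = (x,y)` a cell above the path.  With `r = (x,y)^→` (the easternmost cell above the path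
in row `y`) and `d = (x,y)^↓` (the southernmost cell above the path in column `x`), so that
`(x,y)^⇒ = (r.1 + 1, y)` and `(x,y)^⇓ = (x, d.2 - 1)`, the cell `c` lies in `Dinv(π)` iff
`γ[(x,y)^→] > γ[(x,y)^⇓]` and `γ[(x,y)^↓] > γ[(x,y)^⇒]`. -/
theorem stmt0 (m n : ℕ) (hm : 0 < m) (hn : 0 < n) (hmn : Nat.Coprime m n)
    (A : Finset (ℤ × ℤ)) (hA : IsDyckPath m n A) (c : ℤ × ℤ) (hc : c ∈ A)
    (r : ℤ × ℤ) (hr : r ∈ A) (hr2 : r.2 = c.2) (hrmax : ∀ e ∈ A, e.2 = c.2 → e.1 ≤ r.1)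
    (d : ℤ × ℤ) (hd : d ∈ A) (hd1 : d.1 = c.1) (hdmin : ∀ e ∈ A, e.1 = c.1 → d.2 ≤ e.2) :
    c ∈ dinvSet m n A ↔
      rk m n r.1 c.2 > rk m n c.1 (d.2 - 1) ∧ rk m n c.1 d.2 > rk m n (r.1 + 1) c.2 :=
  stmt0_general m n A hA c hc r hr hr2 hrmax d hd hd1 hdmin

end
end

section
/- Let m,n be coprime positive integers, π an (m,n)-Dyck path, and (x,y) a cell above π. Suppose a is a rank in the same row as (x,y) and b is a rank in the same column as (x,y). If b < a with a below the path and b above the path, or if a < b with b below the path and a above the path, then (x,y) ∉ Dinv(π). -/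
open scoped Classical

noncomputable section

/-!
Write `c = (x, y)`, `p = (x', y)` and `q = (x, y')`. The rank difference is
`γ(p) - γ(q) = (y - y') m - (x' - x) n`, so the hypothesis compares `(x' - x) / (y - y')` with
`m / n`. Since the cells above the path form a Ferrers diagram, a cell of the row (column) of
`c` above the path bounds `arm(c)` (`leg(c)`) from below, and one below the path bounds it from
above. In the first case this gives `arm(c) + 1 ≤ x' - x` and `y - y' ≤ leg(c)`, hence
`(arm(c) + 1) / leg(c) < m / n`; in the second `x' - x ≤ arm(c)` and `leg(c) + 1 ≤ y - y'`,
hence `m / n < arm(c) / (leg(c) + 1)`.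
-/

theorem rk_sub_rk (m n : ℕ) (u v u' v' : ℤ) :
    rk m n u v - rk m n u' v' = (v - v') * m - (u - u') * n := by
  unfold rk
  ring

namespace IsDyckPath

variable {m n : ℕ} {A : Finset (ℤ × ℤ)}

theorem one_le_fst (hA : IsDyckPath m n A) {d : ℤ × ℤ} (hd : d ∈ A) : 1 ≤ d.1 := by
  have := hA.1 hd
  simp only [cells, Finset.mem_product, Finset.mem_Icc] at this
  exact this.1.1

theorem snd_le (hA : IsDyckPath m n A) {d : ℤ × ℤ} (hd : d ∈ A) : d.2 ≤ n := by
  have := hA.1 hd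
  simp only [cells, Finset.mem_product, Finset.mem_Icc] at this
  exact this.2.2

theorem le_armOf (hA : IsDyckPath m n A) {c p : ℤ × ℤ} (hc1 : 1 ≤ c.1) (hp : p ∈ A)
    (hrow : p.2 = c.2) : p.1 - c.1 ≤ armOf A c := by
  have hsub : (Finset.Ioc c.1 p.1).image (fun x => (x, c.2)) ⊆
      A.filter fun d => d.2 = c.2 ∧ c.1 < d.1 := by
    intro d hd
    simp only [Finset.mem_image, Finset.mem_Ioc] at hd
    obtain ⟨x, ⟨hcx, hxp⟩, rfl⟩ := hd
    exact Finset.mem_filter.mpr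
      ⟨hA.2.2 p hp x c.2 (by omega) hxp hrow.le (hrow ▸ hA.snd_le hp), rfl, hcx⟩
  have hcard := Finset.card_le_card hsub
  rw [Finset.card_image_of_injective _ (Prod.mk_left_injective c.2), Int.card_Ioc] at hcard
  unfold armOf
  omega

theorem le_legOf (hA : IsDyckPath m n A) {c q : ℤ × ℤ} (hc2 : c.2 ≤ n) (hq : q ∈ A)
    (hcol : q.1 = c.1) : c.2 - q.2 ≤ legOf A c := by
  have hsub : (Finset.Ico q.2 c.2).image (fun y => (c.1, y)) ⊆
      A.filter fun d => d.1 = c.1 ∧ d.2 < c.2 := by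
    intro d hd
    simp only [Finset.mem_image, Finset.mem_Ico] at hd
    obtain ⟨y, ⟨hqy, hyc⟩, rfl⟩ := hd
    exact Finset.mem_filter.mpr
      ⟨hA.2.2 q hq c.1 y (hcol ▸ hA.one_le_fst hq) hcol.ge hqy (by omega), rfl, hyc⟩
  have hcard := Finset.card_le_card hsub
  rw [Finset.card_image_of_injective _ (Prod.mk_right_injective c.1), Int.card_Ico] at hcard
  unfold legOf
  omega

theorem armOf_lt (hA : IsDyckPath m n A) {c p : ℤ × ℤ} (hc : c ∈ A) (hp1 : 1 ≤ p.1)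
    (hp : p ∉ A) (hrow : p.2 = c.2) : (armOf A c : ℤ) < p.1 - c.1 := by
  have hrow_lt : ∀ d ∈ A, d.2 = c.2 → d.1 < p.1 := fun d hd hd2 => by
    by_contra! hle
    exact hp (hA.2.2 d hd p.1 p.2 hp1 hle (by rw [hrow, hd2]) (hrow ▸ hA.snd_le hc))
  have hsub : (A.filter fun d => d.2 = c.2 ∧ c.1 < d.1) ⊆
      (Finset.Ioo c.1 p.1).image (fun x => (x, c.2)) := by
    intro d hd
    obtain ⟨hdA, hd2, hcd⟩ := Finset.mem_filter.mp hd
    exact Finset.mem_image.mpr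
      ⟨d.1, Finset.mem_Ioo.mpr ⟨hcd, hrow_lt d hdA hd2⟩, by rw [← hd2]⟩
  have hcard := (Finset.card_le_card hsub).trans Finset.card_image_le
  have hcp := hrow_lt c hc rfl
  rw [Int.card_Ioo] at hcard
  unfold armOf
  omega

theorem legOf_lt (hA : IsDyckPath m n A) {c q : ℤ × ℤ} (hc : c ∈ A) (hq2 : q.2 ≤ n)
    (hq : q ∉ A) (hcol : q.1 = c.1) : (legOf A c : ℤ) < c.2 - q.2 := by
  have hcol_gt : ∀ d ∈ A, d.1 = c.1 → q.2 < d.2 := fun d hd hd1 => by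
    by_contra! hle
    exact hq (hA.2.2 d hd q.1 q.2 (hcol ▸ hA.one_le_fst hc) (by rw [hcol, hd1]) hle hq2)
  have hsub : (A.filter fun d => d.1 = c.1 ∧ d.2 < c.2) ⊆
      (Finset.Ioo q.2 c.2).image (fun y => (c.1, y)) := by
    intro d hd
    obtain ⟨hdA, hd1, hdc⟩ := Finset.mem_filter.mp hd
    exact Finset.mem_image.mpr
      ⟨d.2, Finset.mem_Ioo.mpr ⟨hcol_gt d hdA hd1, hdc⟩, by rw [← hd1]⟩
  have hcard := (Finset.card_le_card hsub).trans Finset.card_image_le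
  have hqc := hcol_gt c hc rfl
  rw [Int.card_Ioo] at hcard
  unfold legOf
  omega

end IsDyckPath

section dinvSet

variable {m n : ℕ} {A : Finset (ℤ × ℤ)} {c : ℤ × ℤ}

theorem not_mem_dinvSet_of_armOf_lt_of_le_legOf {i j : ℤ} (harm : armOf A c < i)
    (hleg : j ≤ legOf A c) (hij : i * n < j * m) : c ∉ dinvSet m n A := by
  intro hc
  have hdinv := (Finset.mem_filter.mp hc).2.2
  nlinarith

theorem not_mem_dinvSet_of_le_armOf_of_legOf_lt {i j : ℤ} (harm : i ≤ armOf A c)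
    (hleg : legOf A c < j) (hij : j * m < i * n) : c ∉ dinvSet m n A := by
  intro hc
  have hdinv := (Finset.mem_filter.mp hc).2.1
  nlinarith

end dinvSet

theorem stmt1_general (m n : ℕ)
    (A : Finset (ℤ × ℤ)) (hA : IsDyckPath m n A) (c : ℤ × ℤ) (hc : c ∈ A)
    (p q : ℤ × ℤ) (hp : p ∈ cells m n) (hq : q ∈ cells m n)
    (hprow : p.2 = c.2) (hqcol : q.1 = c.1)
    (h : (rk m n q.1 q.2 < rk m n p.1 p.2 ∧ p ∉ A ∧ q ∈ A) ∨
         (rk m n p.1 p.2 < rk m n q.1 q.2 ∧ q ∉ A ∧ p ∈ A)) :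
    c ∉ dinvSet m n A := by
  simp only [cells, Finset.mem_product, Finset.mem_Icc] at hp hq
  have hrk := rk_sub_rk m n p.1 p.2 q.1 q.2
  rw [hprow, hqcol] at hrk h
  rcases h with ⟨hlt, hpA, hqA⟩ | ⟨hlt, hqA, hpA⟩
  · exact not_mem_dinvSet_of_armOf_lt_of_le_legOf (hA.armOf_lt hc hp.1.1 hpA hprow)
      (hA.le_legOf (hA.snd_le hc) hqA hqcol) (by linarith)
  · exact not_mem_dinvSet_of_le_armOf_of_legOf_lt (hA.le_armOf (hA.one_le_fst hc) hpA hprow)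
      (hA.legOf_lt hc hq.2.2 hqA hqcol) (by linarith)

/-- Let `π` be an `(m,n)`-Dyck path and `c = (x,y)` a cell above the path.  If `p` is a cell
in the same row as `c` and `q` a cell in the same column as `c` (with ranks `a = γ(p)` and
`b = γ(q)`), and either `b < a` with `p` below the path and `q` above the path, or `a < b`
with `q` below the path and `p` above the path, then `c ∉ Dinv(π)`. -/
theorem stmt1 (m n : ℕ) (hm : 0 < m) (hn : 0 < n) (hmn : Nat.Coprime m n)
    (A : Finset (ℤ × ℤ)) (hA : IsDyckPath m n A) (c : ℤ × ℤ) (hc : c ∈ A)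
    (p q : ℤ × ℤ) (hp : p ∈ cells m n) (hq : q ∈ cells m n)
    (hprow : p.2 = c.2) (hqcol : q.1 = c.1)
    (h : (rk m n q.1 q.2 < rk m n p.1 p.2 ∧ p ∉ A ∧ q ∈ A) ∨
         (rk m n p.1 p.2 < rk m n q.1 q.2 ∧ q ∉ A ∧ p ∈ A)) :
    c ∉ dinvSet m n A :=
  stmt1_general m n A hA c hc p q hp hq hprow hqcol h

end
end

section
/- Let m,n be coprime positive integers and π an (m,n)-Dyck path. If the cell (m−1,v) (i.e., a cell in column m−1) is above the path π, then (m−1,v) ∈ Dinv(π). -/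
open scoped Classical

noncomputable section

/-!
No cell above an `(m,n)`-Dyck path lies in the last column, so a cell in column `m − 1` has arm
`0`. Its leg `ℓ` is bounded by looking at the lowest cell below it in its column: that cell has
height at most `v − ℓ`, and lying above the diagonal forces `(m−1)n < (v − ℓ − 1)m ≤ (n − ℓ − 1)m`,
that is `mℓ < n − m`. Both Dinv inequalities follow at once.
-/

open Finset

theorem exists_mem_add_card_le {S : Finset ℤ} (hS : S.Nonempty) {b : ℤ}
    (hb : ∀ y ∈ S, y ≤ b) : ∃ y ∈ S, y + #S ≤ b + 1 := by
  refine ⟨S.min' hS, S.min'_mem hS, ?_⟩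
  have hsub : S ⊆ Icc (S.min' hS) b := fun y hy =>
    mem_Icc.mpr ⟨S.min'_le y hy, hb y hy⟩
  have hcard := card_le_card hsub
  rw [Int.card_Icc] at hcard
  have := hb _ (S.min'_mem hS)
  omega

namespace IsDyckPath

variable {m n : ℕ} {A : Finset (ℤ × ℤ)}

theorem bounds_of_mem (hA : IsDyckPath m n A) {c : ℤ × ℤ} (hc : c ∈ A) :
    1 ≤ c.1 ∧ c.1 ≤ m ∧ 1 ≤ c.2 ∧ c.2 ≤ n := by
  have := hA.1 hc
  simp only [cells, mem_product, mem_Icc] at this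
  tauto

theorem fst_lt (hA : IsDyckPath m n A) {c : ℤ × ℤ} (hc : c ∈ A) : c.1 < m := by
  obtain ⟨-, -, -, hc2⟩ := hA.bounds_of_mem hc
  have hdiag := hA.2.1 c hc
  by_contra! h
  nlinarith

theorem armOf_eq_zero (hA : IsDyckPath m n A) {c : ℤ × ℤ} (hc : c.1 = m - 1) :
    armOf A c = 0 := by
  rw [armOf, card_eq_zero, filter_eq_empty_iff]
  rintro d hd ⟨-, hlt⟩
  have := hA.fst_lt hd
  omega

theorem fst_mul_lt_legOf (hA : IsDyckPath m n A) {c : ℤ × ℤ} (hc : c ∈ A) :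
    c.1 * n < (c.2 - 1 - legOf A c) * m := by
  rcases Nat.eq_zero_or_pos (legOf A c) with h0 | hpos
  · simpa [h0] using hA.2.1 c hc
  set L := A.filter fun d => d.1 = c.1 ∧ d.2 < c.2
  have hinj : Set.InjOn Prod.snd (L : Set (ℤ × ℤ)) := by
    rintro ⟨x, y⟩ hd ⟨x', y'⟩ hd' (rfl : y = y')
    simp only [L, coe_filter, Set.mem_ofPred_eq] at hd hd'
    rw [hd.2.1, hd'.2.1]
  have hcard : #(L.image Prod.snd) = legOf A c := card_image_of_injOn hinj
  obtain ⟨y, hy, hle⟩ := exists_mem_add_card_le (b := c.2 - 1)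
    (card_pos.mp (hcard ▸ hpos)) (by
      simp only [L, mem_image, mem_filter]
      rintro _ ⟨d, ⟨-, -, hd⟩, rfl⟩
      omega)
  obtain ⟨d, hd, rfl⟩ := mem_image.mp hy
  obtain ⟨hdA, hd1, -⟩ := mem_filter.mp hd
  have hdiag := hA.2.1 d hdA
  rw [hd1] at hdiag
  rw [hcard] at hle
  calc c.1 * n < (d.2 - 1) * m := by linarith
    _ ≤ (c.2 - 1 - legOf A c) * m := mul_le_mul_of_nonneg_right (by omega) (by positivity)

end IsDyckPath

theorem stmt2_general (m n : ℕ)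
    (A : Finset (ℤ × ℤ)) (hA : IsDyckPath m n A) (v : ℤ)
    (hv : ((m : ℤ) - 1, v) ∈ A) :
    ((m : ℤ) - 1, v) ∈ dinvSet m n A := by
  obtain ⟨hm, -, -, hvn⟩ := hA.bounds_of_mem hv
  have hleg := hA.fst_mul_lt_legOf hv
  rw [dinvSet, mem_filter, hA.armOf_eq_zero rfl]
  refine ⟨hv, ?_, ?_⟩ <;> push_cast <;> nlinarith

/-- If the cell `(m−1, v)` is above the `(m,n)`-Dyck path `π`, then `(m−1,v) ∈ Dinv(π)`. -/
theorem stmt2 (m n : ℕ) (hm : 0 < m) (hn : 0 < n) (hmn : Nat.Coprime m n)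
    (A : Finset (ℤ × ℤ)) (hA : IsDyckPath m n A) (v : ℤ)
    (hv : ((m : ℤ) - 1, v) ∈ A) :
    ((m : ℤ) - 1, v) ∈ dinvSet m n A :=
  stmt2_general m n A hA v hv

end
end

section
/- Let m,n be coprime positive integers. The map sending an (m,n)-rank word w to the (m,n)-Dyck path Π(w) whose cells above the path are exactly the cells of the (m,n)-diagram whose rank is a highlighted letter of w is a well-defined bijection between the set of (m,n)-rank words and the set of (m,n)-Dyck paths. -/
open scoped Classical

noncomputable section

/-! The letter `(k, ℓ)` and the cell `(ℓ, n+1−k)` have the same rank, and `(k, ℓ) ↦ (ℓ, n+1−k)`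
is a bijection of `ℤ × ℤ`. It carries the box `[1,n] × [1,m]` onto the diagram, and since the
rank of a cell `(u,v)` is `(v−1)m − un`, positivity of the rank means lying strictly above the
diagonal. The order-ideal condition on highlighted letters becomes northwest-closedness, so `Π`
is the restriction of a bijection of `Finset (ℤ × ℤ)` mapping rank words exactly onto Dyck
paths. -/

def letterCell (n : ℕ) : ℤ × ℤ ≃ ℤ × ℤ where
  toFun p := (p.2, n + 1 - p.1)
  invFun c := (n + 1 - c.2, c.1)
  left_inv p := by simp
  right_inv c := by simp

section
variable {m n : ℕ}

@[simp] lemma letterCell_apply (p : ℤ × ℤ) : letterCell n p = (p.2, n + 1 - p.1) := rfl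

@[simp] lemma letterCell_symm_apply (c : ℤ × ℤ) : (letterCell n).symm c = (n + 1 - c.2, c.1) :=
  rfl

lemma toPath_eq_finsetCongr : toPath n = (letterCell n).finsetCongr := by
  ext1 H
  rw [Equiv.finsetCongr_apply, Finset.map_eq_image]
  rfl

lemma rk_eq_sub (u v : ℤ) : rk m n u v = (v - 1) * m - u * n := by
  unfold rk; ring

lemma rk_letterCell (p : ℤ × ℤ) :
    rk m n (letterCell n p).1 (letterCell n p).2 = letterRank m n p := by
  simp only [rk, letterRank, letterCell_apply]; ring

lemma mem_letters_iff (p : ℤ × ℤ) :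
    p ∈ letters m n ↔ letterCell n p ∈ cells m n ∧ 0 < letterRank m n p := by
  simp only [letters, cells, letterRank, Finset.mem_filter, Finset.mem_product, Finset.mem_Icc,
    letterCell_apply]
  omega

lemma isDyckPath_finsetCongr_letterCell_iff (H : Finset (ℤ × ℤ)) :
    IsDyckPath m n ((letterCell n).finsetCongr H) ↔ IsRankWord m n H := by
  have hbounds : ((letterCell n).finsetCongr H ⊆ cells m n ∧
      ∀ c ∈ (letterCell n).finsetCongr H, 0 < (c.2 - 1) * (m : ℤ) - c.1 * n) ↔
      H ⊆ letters m n := by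
    simp only [Finset.subset_iff, Equiv.finsetCongr_apply, Finset.forall_mem_map, ← forall_and,
      Equiv.coe_toEmbedding, ← rk_eq_sub, rk_letterCell, mem_letters_iff]
  have hclosed : (∀ c ∈ (letterCell n).finsetCongr H, ∀ x y : ℤ, 1 ≤ x → x ≤ c.1 → c.2 ≤ y →
      y ≤ (n : ℤ) → (x, y) ∈ (letterCell n).finsetCongr H) ↔
      ∀ p ∈ H, ∀ i j : ℤ, 1 ≤ i → i ≤ p.1 → 1 ≤ j → j ≤ p.2 → (i, j) ∈ H := by
    simp only [Equiv.finsetCongr_apply, Finset.forall_mem_map]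
    simp only [Finset.mem_map_equiv, Equiv.coe_toEmbedding, letterCell_apply,
      letterCell_symm_apply]
    refine forall₂_congr fun p _ => ⟨fun h i j hi hip hj hjp => ?_, fun h x y hx hxp hy hyn => ?_⟩
    · simpa using h j (n + 1 - i) hj hjp (by omega) (by omega)
    · exact h (n + 1 - y) x (by omega) (by omega) hx hxp
  rw [IsDyckPath, IsRankWord, ← and_assoc, hbounds, hclosed]

end

theorem stmt5_general (m n : ℕ) :
    Set.BijOn (toPath n) {H : Finset (ℤ × ℤ) | IsRankWord m n H}
      {A : Finset (ℤ × ℤ) | IsDyckPath m n A} := by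
  rw [toPath_eq_finsetCongr]
  exact Equiv.bijOn _ isDyckPath_finsetCongr_letterCell_iff

/-- The map sending an `(m,n)`-rank word `w` to the `(m,n)`-Dyck path `Π(w)` whose cells
above the path are exactly the cells of the diagram whose rank is a highlighted letter of
`w` is a well-defined bijection between `(m,n)`-rank words and `(m,n)`-Dyck paths. -/
theorem stmt5 (m n : ℕ) (hm : 0 < m) (hn : 0 < n) (hmn : Nat.Coprime m n) :
    Set.BijOn (toPath n) {H : Finset (ℤ × ℤ) | IsRankWord m n H}
      {A : Finset (ℤ × ℤ) | IsDyckPath m n A} :=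
  stmt5_general m n

end
end

section
/- Let m,n be coprime positive integers and w an (m,n)-rank word. Then area(w) = area(Π(w)): the number of unhighlighted letters of w equals the number of cells with positive rank lying below the Dyck path Π(w). -/
open scoped Classical

noncomputable section

/-
The letter `(k, ℓ)` of rank `mn − km − ℓn` and the cell `(ℓ, n+1−k)` have the same rank, and
`(k, ℓ) ↦ (ℓ, n+1−k)` is a bijection from the letters onto the cells of positive rank. Since
`Π(w)` is the image of the highlighted letters, it carries the unhighlighted letters onto the
positive-rank cells below the path.
-/

def cellOfLetter (n : ℕ) (p : ℤ × ℤ) : ℤ × ℤ := (p.2, (n : ℤ) + 1 - p.1)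

theorem cellOfLetter_injective (n : ℕ) : Function.Injective (cellOfLetter n) := by
  rintro ⟨k, ℓ⟩ ⟨k', ℓ'⟩ h
  simp only [cellOfLetter, Prod.mk.injEq] at h
  obtain ⟨rfl, h⟩ := h
  simp only [Prod.mk.injEq, and_true]
  omega

theorem toPath_eq_image_cellOfLetter (n : ℕ) (H : Finset (ℤ × ℤ)) :
    toPath n H = H.image (cellOfLetter n) := rfl

theorem rk_cellOfLetter (m n : ℕ) (p : ℤ × ℤ) :
    rk m n (cellOfLetter n p).1 (cellOfLetter n p).2 = letterRank m n p := by
  simp only [rk, cellOfLetter, letterRank]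
  ring

def letterOfCell (n : ℕ) (c : ℤ × ℤ) : ℤ × ℤ := ((n : ℤ) + 1 - c.2, c.1)

theorem cellOfLetter_letterOfCell (n : ℕ) (c : ℤ × ℤ) :
    cellOfLetter n (letterOfCell n c) = c := by
  simp [cellOfLetter, letterOfCell]

theorem image_cellOfLetter_letters (m n : ℕ) :
    (letters m n).image (cellOfLetter n) = (cells m n).filter fun c => 0 < rk m n c.1 c.2 := by
  ext c
  rw [Finset.mem_filter, Finset.mem_image]
  constructor
  · rintro ⟨⟨k, ℓ⟩, hp, rfl⟩
    rw [rk_cellOfLetter]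
    simp only [letters, Finset.mem_filter, Finset.mem_product, Finset.mem_Icc] at hp
    obtain ⟨⟨⟨hk1, hkn⟩, hℓ1, hℓm⟩, hpos⟩ := hp
    simp only [cells, cellOfLetter, Finset.mem_product, Finset.mem_Icc]
    exact ⟨⟨⟨hℓ1, hℓm⟩, by omega, by omega⟩, hpos⟩
  · rintro ⟨hc, hpos⟩
    refine ⟨letterOfCell n c, ?_, cellOfLetter_letterOfCell n c⟩
    rw [← cellOfLetter_letterOfCell n c, rk_cellOfLetter] at hpos
    simp only [cells, Finset.mem_product, Finset.mem_Icc] at hc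
    simp only [letterOfCell, letters, Finset.mem_filter, Finset.mem_product, Finset.mem_Icc]
    exact ⟨⟨⟨by omega, by omega⟩, hc.1⟩, hpos⟩

theorem areaSet_eq_sdiff (m n : ℕ) (A : Finset (ℤ × ℤ)) :
    areaSet m n A = ((cells m n).filter fun c => 0 < rk m n c.1 c.2) \ A := by
  rw [areaSet, Finset.sdiff_eq_filter, Finset.filter_filter]

theorem areaSet_toPath (m n : ℕ) (H : Finset (ℤ × ℤ)) :
    areaSet m n (toPath n H) = (letters m n \ H).image (cellOfLetter n) := by
  rw [areaSet_eq_sdiff, toPath_eq_image_cellOfLetter, ← image_cellOfLetter_letters,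
    Finset.image_sdiff _ _ (cellOfLetter_injective n)]

theorem stmt6_general (m n : ℕ)
    (H : Finset (ℤ × ℤ)) :
    wordArea m n H = area m n (toPath n H) := by
  rw [area, areaSet_toPath, Finset.card_image_of_injective _ (cellOfLetter_injective n),
    wordArea, Finset.sdiff_eq_filter]

/-- For an `(m,n)`-rank word `w`, `area(w) = area(Π(w))`: the number of unhighlighted
letters of `w` equals the number of cells with positive rank below the Dyck path `Π(w)`. -/
theorem stmt6 (m n : ℕ) (hm : 0 < m) (hn : 0 < n) (hmn : Nat.Coprime m n)
    (H : Finset (ℤ × ℤ)) (hw : IsRankWord m n H) :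
    wordArea m n H = area m n (toPath n H) :=
  stmt6_general m n H

end
end

section
/- Let m,n be coprime positive integers and w an (m,n)-rank word. Partition S(w) into S_< = {(a_k,b_ℓ) ∈ S(w) : k < ℓ} and S_> = {(a_k,b_ℓ) ∈ S(w) : k > ℓ}. If (a_k,b_ℓ) ∼ (c_r,d_t) in S(w), then (a_k,b_ℓ) and (c_r,d_t) are both in S_< or both in S_>. -/
open scoped Classical

noncomputable section

/-!
Write letters as coordinate pairs `(k, ℓ)`. For `(a, b) ∈ S(w)` the letters `a` and `b` are
incomparable in the product order: `b ≤ a` would make `b` highlighted, and `a ≤ b` would give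
`rank a ≥ rank b`. Hence the color of `a` is smaller than that of `b` exactly when the first
coordinate of `a` is larger. As `m` is invertible modulo `n`, two letters have ranks congruent
modulo `n` only if they have the same first coordinate, so `∼`-related pairs share a coordinate
of their highlighted and of their unhighlighted letters. A pair of `S_<` related to a pair of
`S_>` would then place an unhighlighted letter below a highlighted one.
-/

section RankWord

variable {m n : ℕ} {H : Finset (ℤ × ℤ)} {p q : ℤ × ℤ} {x y : (ℤ × ℤ) × (ℤ × ℤ)}

lemma bounds_of_mem_letters (hp : p ∈ letters m n) :
    1 ≤ p.1 ∧ p.1 ≤ n ∧ 1 ≤ p.2 ∧ p.2 ≤ m := by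
  simp only [letters, Finset.mem_filter, Finset.mem_product, Finset.mem_Icc] at hp
  tauto

lemma letterRank_le_of_le (h₁ : p.1 ≤ q.1) (h₂ : p.2 ≤ q.2) :
    letterRank m n q ≤ letterRank m n p := by
  have hm := mul_le_mul_of_nonneg_right h₁ (Nat.cast_nonneg (α := ℤ) m)
  have hn := mul_le_mul_of_nonneg_right h₂ (Nat.cast_nonneg (α := ℤ) n)
  unfold letterRank
  linarith

lemma fst_eq_of_letterRank_modEq (hmn : Nat.Coprime m n) (hp : p ∈ letters m n)
    (hq : q ∈ letters m n) (h : letterRank m n p ≡ letterRank m n q [ZMOD n]) : p.1 = q.1 := by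
  obtain ⟨hp₁, hp₂, -⟩ := bounds_of_mem_letters hp
  obtain ⟨hq₁, hq₂, -⟩ := bounds_of_mem_letters hq
  have hdvd : (n : ℤ) ∣ (p.1 - q.1) * m + (p.2 - q.2) * n := by
    convert h.dvd using 1
    unfold letterRank
    ring
  have hdvd' : (n : ℤ) ∣ p.1 - q.1 :=
    (Nat.isCoprime_iff_coprime.mpr hmn.symm).dvd_of_dvd_mul_right
      ((dvd_add_left (dvd_mul_left _ _)).mp hdvd)
  have := Int.eq_zero_of_abs_lt_dvd hdvd' (abs_lt.mpr ⟨by omega, by omega⟩)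
  omega

lemma coords_eq_of_wordRel (hmn : Nat.Coprime m n) (hx : x ∈ wordS m n H)
    (hy : y ∈ wordS m n H) (hxy : wordRel m n x y) :
    (x.1.2 = y.1.2 ∧ x.2.1 = y.2.1) ∨ (x.2.2 = y.2.2 ∧ x.1.1 = y.1.1) := by
  simp only [wordS, Finset.mem_filter, Finset.mem_product] at hx hy
  exact hxy.imp (fun h => ⟨h.1, fst_eq_of_letterRank_modEq hmn hx.1.2 hy.1.2 h.2⟩)
    (fun h => ⟨h.1, fst_eq_of_letterRank_modEq hmn hx.1.1 hy.1.1 h.2⟩)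

namespace IsRankWord

lemma mem_of_le (hw : IsRankWord m n H) (hp : p ∈ H) (hq : q ∈ letters m n)
    (h₁ : q.1 ≤ p.1) (h₂ : q.2 ≤ p.2) : q ∈ H := by
  obtain ⟨hq₁, -, hq₂, -⟩ := bounds_of_mem_letters hq
  exact hw.2 p hp q.1 q.2 hq₁ h₁ hq₂ h₂

lemma mem_wordS_cases (hw : IsRankWord m n H) (hx : x ∈ wordS m n H) :
    (x.2.1 < x.1.1 ∧ x.1.2 < x.2.2) ∨ (x.1.1 < x.2.1 ∧ x.2.2 < x.1.2) := by
  simp only [wordS, Finset.mem_filter, Finset.mem_product] at hx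
  obtain ⟨⟨-, hb⟩, ha, hbH, hab⟩ := hx
  have not_below : ¬ (x.2.1 ≤ x.1.1 ∧ x.2.2 ≤ x.1.2) := fun h =>
    hbH (hw.mem_of_le ha hb h.1 h.2)
  have not_above : ¬ (x.1.1 ≤ x.2.1 ∧ x.1.2 ≤ x.2.2) := fun h =>
    (letterRank_le_of_le h.1 h.2).not_gt hab
  omega

lemma color_lt_of_color_lt (hw : IsRankWord m n H) (hx : x ∈ wordS m n H)
    (hy : y ∈ wordS m n H)
    (h : (x.1.2 = y.1.2 ∧ x.2.1 = y.2.1) ∨ (x.2.2 = y.2.2 ∧ x.1.1 = y.1.1))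
    (hlt : x.1.2 < x.2.2) : y.1.2 < y.2.2 := by
  have hx' := hw.mem_wordS_cases hx
  have hy' := hw.mem_wordS_cases hy
  by_contra hge
  simp only [wordS, Finset.mem_filter, Finset.mem_product] at hx hy
  rcases h with ⟨h₁, h₂⟩ | ⟨h₁, h₂⟩
  · exact hy.2.2.1 (hw.mem_of_le hx.2.1 hy.1.2 (by omega) (by omega))
  · exact hx.2.2.1 (hw.mem_of_le hy.2.1 hx.1.2 (by omega) (by omega))

end IsRankWord

end RankWord

theorem stmt7_general (m n : ℕ) (hmn : Nat.Coprime m n)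
    (H : Finset (ℤ × ℤ)) (hw : IsRankWord m n H)
    (x y : (ℤ × ℤ) × (ℤ × ℤ)) (hx : x ∈ wordS m n H) (hy : y ∈ wordS m n H)
    (hxy : wordRel m n x y) :
    (x.1.2 < x.2.2 ∧ y.1.2 < y.2.2) ∨ (x.2.2 < x.1.2 ∧ y.2.2 < y.1.2) := by
  have hcoords := coords_eq_of_wordRel hmn hx hy hxy
  rcases hw.mem_wordS_cases hx with ⟨-, hxlt⟩ | ⟨-, hxgt⟩
  · exact Or.inl ⟨hxlt, hw.color_lt_of_color_lt hx hy hcoords hxlt⟩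
  · refine Or.inr ⟨hxgt, ?_⟩
    rcases hw.mem_wordS_cases hy with ⟨-, hylt⟩ | ⟨-, hygt⟩
    · have := hw.color_lt_of_color_lt hy hx (by omega) hylt
      omega
    · exact hygt

/-- If `(a_k,b_ℓ) ∼ (c_r,d_t)` in `S(w)`, then both pairs lie in `S_<` (first color less
than second color) or both lie in `S_>` (first color greater than second color). -/
theorem stmt7 (m n : ℕ) (hm : 0 < m) (hn : 0 < n) (hmn : Nat.Coprime m n)
    (H : Finset (ℤ × ℤ)) (hw : IsRankWord m n H)
    (x y : (ℤ × ℤ) × (ℤ × ℤ)) (hx : x ∈ wordS m n H) (hy : y ∈ wordS m n H)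
    (hxy : wordRel m n x y) :
    (x.1.2 < x.2.2 ∧ y.1.2 < y.2.2) ∨ (x.2.2 < x.1.2 ∧ y.2.2 < y.1.2) :=
  stmt7_general m n hmn H hw x y hx hy hxy

end
end

section
/- Let m,n be coprime positive integers. For every cell (u,v) of the (m,n)-diagram with 1 ≤ u ≤ m−1 and 2 ≤ v ≤ n, one has γ(m−u, n−v+2) = −γ(u,v); moreover no rank equals 0, and consequently the number of cells (u,v) with 1 ≤ u ≤ m, 1 ≤ v ≤ n and γ(u,v) > 0 equals (m−1)(n−1)/2. -/
open scoped Classical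

noncomputable section

/-! The point reflection `(u, v) ↦ (m − u, n − v + 2)` maps the rectangle `[1, m−1] × [2, n]`
onto itself and negates ranks, while the rest of the diagram (rightmost column and bottom row)
has negative rank. A rank `γ(u,v)` vanishes only if `m ∣ n (m − u)`, which by coprimality forces
`u = m`, where ranks are negative. Hence exactly half of the `(m−1)(n−1)` cells of the rectangle
have positive rank. -/

open Finset

section Involution

variable {α β : Type*} [AddCommGroup β] [LinearOrder β] [IsOrderedAddMonoid β]

theorem Finset.card_filter_pos_eq_card_filter_neg_of_involution {s : Finset α} {σ : α → α}
    {f : α → β} (hσ : ∀ x ∈ s, σ x ∈ s) (hσσ : ∀ x ∈ s, σ (σ x) = x)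
    (hf : ∀ x ∈ s, f (σ x) = -f x) :
    #(s.filter (0 < f ·)) = #(s.filter (f · < 0)) := by
  refine card_nbij' σ σ ?_ ?_ (fun x hx => hσσ x (mem_filter.1 hx).1)
    (fun x hx => hσσ x (mem_filter.1 hx).1)
  · intro x hx
    rw [mem_coe, mem_filter] at hx ⊢
    exact ⟨hσ x hx.1, by rw [hf x hx.1]; exact neg_neg_iff_pos.2 hx.2⟩
  · intro x hx
    rw [mem_coe, mem_filter] at hx ⊢
    exact ⟨hσ x hx.1, by rw [hf x hx.1]; exact neg_pos.2 hx.2⟩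

theorem Finset.two_mul_card_filter_pos_of_involution {s : Finset α} {σ : α → α} {f : α → β}
    (hσ : ∀ x ∈ s, σ x ∈ s) (hσσ : ∀ x ∈ s, σ (σ x) = x) (hf : ∀ x ∈ s, f (σ x) = -f x)
    (hf₀ : ∀ x ∈ s, f x ≠ 0) :
    2 * #(s.filter (0 < f ·)) = #s := by
  have hneg : s.filter (¬0 < f ·) = s.filter (f · < 0) :=
    filter_congr fun x hx => by rw [not_lt]; exact (hf₀ x hx).le_iff_lt
  rw [← card_filter_add_card_filter_not (s := s) (0 < f ·), hneg,
    ← card_filter_pos_eq_card_filter_neg_of_involution hσ hσσ hf, two_mul]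

end Involution

theorem rk_reflect (m n : ℕ) (u v : ℤ) :
    rk m n ((m : ℤ) - u) ((n : ℤ) - v + 2) = -rk m n u v := by
  simp only [rk]
  ring

theorem mem_cells {m n : ℕ} {c : ℤ × ℤ} :
    c ∈ cells m n ↔ (1 ≤ c.1 ∧ c.1 ≤ m) ∧ 1 ≤ c.2 ∧ c.2 ≤ n := by
  simp only [cells, mem_product, mem_Icc]

theorem rk_ne_zero {m n : ℕ} (hmn : m.Coprime n) :
    ∀ c ∈ cells m n, rk m n c.1 c.2 ≠ 0 := by
  rintro ⟨u, v⟩ hc h₀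
  obtain ⟨⟨hu₁, hum⟩, hv₁, hvn⟩ := mem_cells.1 hc
  simp only [rk] at h₀
  have hdvd : (m : ℤ) ∣ n * (m - u) := ⟨n + 1 - v, by linear_combination h₀⟩
  have hu : (m : ℤ) - u = 0 := Int.eq_zero_of_dvd_of_nonneg_of_lt (by omega) (by omega)
    ((Nat.isCoprime_iff_coprime.2 hmn).dvd_of_dvd_mul_left hdvd)
  obtain rfl : u = m := by omega
  nlinarith

def innerCells (m n : ℕ) : Finset (ℤ × ℤ) := Icc 1 ((m : ℤ) - 1) ×ˢ Icc 2 (n : ℤ)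

theorem mem_innerCells {m n : ℕ} {c : ℤ × ℤ} :
    c ∈ innerCells m n ↔ (1 ≤ c.1 ∧ c.1 ≤ (m : ℤ) - 1) ∧ 2 ≤ c.2 ∧ c.2 ≤ n := by
  simp only [innerCells, mem_product, mem_Icc]

theorem card_innerCells (m n : ℕ) : #(innerCells m n) = (m - 1) * (n - 1) := by
  rw [innerCells, card_product, Int.card_Icc, Int.card_Icc]
  congr 1 <;> omega

theorem innerCells_subset_cells (m n : ℕ) : innerCells m n ⊆ cells m n := fun c hc => by
  rw [mem_innerCells] at hc
  rw [mem_cells]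
  omega

theorem mem_innerCells_of_rk_pos {m n : ℕ} {c : ℤ × ℤ} (hc : c ∈ cells m n)
    (hpos : 0 < rk m n c.1 c.2) : c ∈ innerCells m n := by
  rw [mem_cells] at hc
  rw [mem_innerCells]
  obtain ⟨⟨hu₁, hum⟩, hv₁, hvn⟩ := hc
  simp only [rk] at hpos
  refine ⟨⟨hu₁, ?_⟩, ?_, hvn⟩
  · by_contra! h
    nlinarith
  · by_contra! h
    nlinarith

theorem filter_cells_rk_pos (m n : ℕ) :
    (cells m n).filter (fun c => 0 < rk m n c.1 c.2) =
      (innerCells m n).filter (fun c => 0 < rk m n c.1 c.2) := by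
  ext c
  simp only [mem_filter]
  exact ⟨fun ⟨hc, hpos⟩ => ⟨mem_innerCells_of_rk_pos hc hpos, hpos⟩,
    fun ⟨hc, hpos⟩ => ⟨innerCells_subset_cells m n hc, hpos⟩⟩

theorem stmt9_general (m n : ℕ) (hmn : Nat.Coprime m n) :
    (∀ u v : ℤ, 1 ≤ u → u ≤ (m : ℤ) - 1 → 2 ≤ v → v ≤ (n : ℤ) →
        rk m n ((m : ℤ) - u) ((n : ℤ) - v + 2) = - rk m n u v) ∧
    (∀ c ∈ cells m n, rk m n c.1 c.2 ≠ 0) ∧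
    ((cells m n).filter fun c => 0 < rk m n c.1 c.2).card = (m - 1) * (n - 1) / 2 := by
  refine ⟨fun u v _ _ _ _ => rk_reflect m n u v, rk_ne_zero hmn, ?_⟩
  have hhalf := two_mul_card_filter_pos_of_involution
    (s := innerCells m n) (σ := fun c => ((m : ℤ) - c.1, (n : ℤ) - c.2 + 2))
    (f := fun c => rk m n c.1 c.2)
    (fun c hc => by rw [mem_innerCells] at hc ⊢; omega)
    (fun c _ => Prod.ext (sub_sub_cancel _ _) (by ring))
    (fun c _ => rk_reflect m n c.1 c.2)
    (fun c hc => rk_ne_zero hmn c (innerCells_subset_cells m n hc))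
  rw [filter_cells_rk_pos, ← card_innerCells, ← hhalf, Nat.mul_div_cancel_left _ two_pos]

/-- In the `(m,n)`-diagram: for `1 ≤ u ≤ m−1` and `2 ≤ v ≤ n` one has
`γ(m−u, n−v+2) = −γ(u,v)`; no rank is `0`; and the number of cells with positive rank is
`(m−1)(n−1)/2`. -/
theorem stmt9 (m n : ℕ) (hm : 0 < m) (hn : 0 < n) (hmn : Nat.Coprime m n) :
    (∀ u v : ℤ, 1 ≤ u → u ≤ (m : ℤ) - 1 → 2 ≤ v → v ≤ (n : ℤ) →
        rk m n ((m : ℤ) - u) ((n : ℤ) - v + 2) = - rk m n u v) ∧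
    (∀ c ∈ cells m n, rk m n c.1 c.2 ≠ 0) ∧
    ((cells m n).filter fun c => 0 < rk m n c.1 c.2).card = (m - 1) * (n - 1) / 2 :=
  stmt9_general m n hmn

end
end

section
/- Let m,n be coprime positive integers and π an (m,n)-Dyck path. Then area(π) + dinv(π) + skips(π) = (m−1)(n−1)/2. -/
open scoped Classical

noncomputable section

/-!
The cells above a Dyck path all have positive rank, `Area` is the set of the remaining cells of
positive rank, and `Dinv`, `Skips` split the cells above the path; so the sum is the number of
cells of positive rank, independently of the path. Shifting `(u, v) ↦ (u, v - 1)`, these are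
the lattice points of the open rectangle `(0, m) × (0, n)` strictly above the diagonal
`y = (n/m)x`. The point reflection through the centre of the rectangle exchanges the points above
and below the diagonal, and coprimality of `m` and `n` leaves no lattice point on it, so exactly
half of the `(m - 1)(n - 1)` points lie above.
-/

def posRankCells (m n : ℕ) : Finset (ℤ × ℤ) :=
  (cells m n).filter fun c => 0 < rk m n c.1 c.2

def innerRect (m n : ℕ) : Finset (ℤ × ℤ) :=
  Finset.Icc 1 ((m : ℤ) - 1) ×ˢ Finset.Icc 1 ((n : ℤ) - 1)

lemma rk_eq (m n : ℕ) (u v : ℤ) : rk m n u v = (v - 1) * m - u * n := by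
  unfold rk; ring

lemma mem_innerRect {m n : ℕ} {c : ℤ × ℤ} :
    c ∈ innerRect m n ↔ 1 ≤ c.1 ∧ c.1 ≤ (m : ℤ) - 1 ∧ 1 ≤ c.2 ∧ c.2 ≤ (n : ℤ) - 1 := by
  simp [innerRect, and_assoc]

lemma card_innerRect (m n : ℕ) : (innerRect m n).card = (m - 1) * (n - 1) := by
  rw [innerRect, Finset.card_product, Int.card_Icc, Int.card_Icc]
  congr 1 <;> omega

lemma mul_ne_mul_of_coprime {m n : ℕ} (hmn : Nat.Coprime m n) {u v : ℤ}
    (hu : 1 ≤ u) (hum : u < m) : u * n ≠ v * m := by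
  intro h
  have hdvd : (m : ℤ) ∣ u :=
    (Nat.isCoprime_iff_coprime.mpr hmn).dvd_of_dvd_mul_right
      ⟨v, by rw [h, mul_comm]⟩
  have := Int.le_of_dvd (by omega) hdvd
  omega

lemma card_innerRect_above_eq_below (m n : ℕ) :
    ((innerRect m n).filter fun c => c.1 * (n : ℤ) < c.2 * m).card
      = ((innerRect m n).filter fun c => c.2 * (m : ℤ) < c.1 * n).card := by
  have reflect_mem {c : ℤ × ℤ} (hc : c ∈ innerRect m n) :
      ((m : ℤ) - c.1, (n : ℤ) - c.2) ∈ innerRect m n := by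
    rw [mem_innerRect] at hc ⊢; omega
  apply Finset.card_nbij' (fun c => ((m : ℤ) - c.1, (n : ℤ) - c.2))
    (fun c => ((m : ℤ) - c.1, (n : ℤ) - c.2))
  · intro c hc
    simp only [Finset.coe_filter, Set.mem_ofPred_eq] at hc ⊢
    exact ⟨reflect_mem hc.1, by linarith [hc.2]⟩
  · intro c hc
    simp only [Finset.coe_filter, Set.mem_ofPred_eq] at hc ⊢
    exact ⟨reflect_mem hc.1, by linarith [hc.2]⟩
  all_goals intro c _; simp

lemma two_mul_card_innerRect_above {m n : ℕ} (hmn : Nat.Coprime m n) :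
    2 * ((innerRect m n).filter fun c => c.1 * (n : ℤ) < c.2 * m).card = (m - 1) * (n - 1) := by
  have off_diagonal : ((innerRect m n).filter fun c => ¬ c.1 * (n : ℤ) < c.2 * m)
      = (innerRect m n).filter fun c => c.2 * (m : ℤ) < c.1 * n := by
    refine Finset.filter_congr fun c hc => ?_
    rw [mem_innerRect] at hc
    have := mul_ne_mul_of_coprime hmn (v := c.2) hc.1 (by omega)
    omega
  have split := Finset.card_filter_add_card_filter_not (s := innerRect m n)
    (fun c => c.1 * (n : ℤ) < c.2 * m)
  rw [off_diagonal, ← card_innerRect_above_eq_below, card_innerRect] at split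
  omega

lemma card_posRankCells (m n : ℕ) :
    (posRankCells m n).card = ((innerRect m n).filter fun c => c.1 * (n : ℤ) < c.2 * m).card := by
  apply Finset.card_nbij' (fun c => (c.1, c.2 - 1)) (fun c => (c.1, c.2 + 1))
  · intro c hc
    simp only [posRankCells, cells, Finset.coe_filter, Finset.mem_product, Finset.mem_Icc,
      Set.mem_ofPred_eq, rk_eq, mem_innerRect] at hc ⊢
    refine ⟨⟨hc.1.1.1, ?_, ?_, by omega⟩, by linarith⟩ <;> nlinarith
  · intro c hc
    simp only [posRankCells, cells, Finset.coe_filter, Finset.mem_product, Finset.mem_Icc,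
      Set.mem_ofPred_eq, rk_eq, mem_innerRect] at hc ⊢
    exact ⟨⟨⟨hc.1.1, by omega⟩, by omega, by omega⟩, by linarith⟩
  all_goals intro c _; simp

lemma two_mul_card_posRankCells {m n : ℕ} (hmn : Nat.Coprime m n) :
    2 * (posRankCells m n).card = (m - 1) * (n - 1) := by
  rw [card_posRankCells, two_mul_card_innerRect_above hmn]

lemma IsDyckPath.subset_posRankCells {m n : ℕ} {A : Finset (ℤ × ℤ)} (hA : IsDyckPath m n A) :
    A ⊆ posRankCells m n := fun c hc =>
  Finset.mem_filter.mpr ⟨hA.1 hc, by rw [rk_eq]; exact hA.2.1 c hc⟩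

lemma area_add_card_of_subset {m n : ℕ} {A : Finset (ℤ × ℤ)} (hA : A ⊆ posRankCells m n) :
    area m n A + A.card = (posRankCells m n).card := by
  have : areaSet m n A = posRankCells m n \ A := by
    rw [Finset.sdiff_eq_filter, posRankCells, Finset.filter_filter, areaSet]
  rw [area, this, Finset.card_sdiff_add_card_eq_card hA]

lemma dinv_add_skips (m n : ℕ) (A : Finset (ℤ × ℤ)) : dinv m n A + skips m n A = A.card := by
  have : skipsSet m n A = A \ dinvSet m n A := by
    rw [Finset.sdiff_eq_filter, skipsSet]
  rw [dinv, skips, this, add_comm]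
  exact Finset.card_sdiff_add_card_eq_card (Finset.filter_subset _ A)

theorem stmt10_general (m n : ℕ) (hmn : Nat.Coprime m n)
    (A : Finset (ℤ × ℤ)) (hA : IsDyckPath m n A) :
    area m n A + dinv m n A + skips m n A = (m - 1) * (n - 1) / 2 := by
  have h_area := area_add_card_of_subset hA.subset_posRankCells
  have h_split := dinv_add_skips m n A
  have h_count := two_mul_card_posRankCells hmn
  omega

/-- For an `(m,n)`-Dyck path `π`, `area(π) + dinv(π) + skips(π) = (m−1)(n−1)/2`. -/
theorem stmt10 (m n : ℕ) (hm : 0 < m) (hn : 0 < n) (hmn : Nat.Coprime m n)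
    (A : Finset (ℤ × ℤ)) (hA : IsDyckPath m n A) :
    area m n A + dinv m n A + skips m n A = (m - 1) * (n - 1) / 2 :=
  stmt10_general m n hmn A hA

end
end

section
/- Let n > 1 be an integer not divisible by 3. Then C_{3,n}(q,t) = Σ_{i=0}^{⌊n/3⌋} s_{(n−1−2i, i)}(q,t), where s_{(λ1,λ2)}(q,t) = Σ_{j=0}^{λ1−λ2} q^{λ2+j} t^{λ1−j} is the two-variable Schur polynomial of the two-row partition (λ1,λ2). -/
open scoped Classical

noncomputable section

/-! For `m = 3` no cell of the third column lies above the diagonal, and every column of the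
region above a Dyck path is a top segment, so a `(3,n)`-Dyck path is determined by the heights
`a ≥ b` of its first two columns, subject to `a + ⌊n/3⌋ < n` and `b ≤ ⌊n/3⌋`. Every cell above
the path has positive rank and there are `n - 1` positive-rank cells, so the area is
`n - 1 - a - b`; the dinv is read off the explicit arms and legs. Finally `(a, b) ↦ (dinv, area)` is a bijection onto the set of exponents `(x, y)` of the
monomials `q^x t^y` of `Σ_i s_{(n-1-2i, i)}`, each of which occurs there exactly once. -/

open Finset

namespace RationalDyck

lemma mem_cells {m n : ℕ} {c : ℤ × ℤ} :
    c ∈ cells m n ↔ 1 ≤ c.1 ∧ c.1 ≤ m ∧ 1 ≤ c.2 ∧ c.2 ≤ n := by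
  simp only [cells, mem_product, mem_Icc, and_assoc]

lemma eq_Icc_of_upperClosed {n : ℤ} {T : Finset ℤ} (hle : ∀ v ∈ T, v ≤ n)
    (hup : ∀ v ∈ T, ∀ y, v ≤ y → y ≤ n → y ∈ T) :
    T = Icc (n + 1 - #T) n := by
  rcases T.eq_empty_or_nonempty with rfl | hne
  · simp
  set v₀ := T.min' hne
  have hv₀ : v₀ ≤ n := hle _ (T.min'_mem hne)
  have hT : T = Icc v₀ n :=
    Subset.antisymm (fun v hv => mem_Icc.2 ⟨T.min'_le v hv, hle v hv⟩)
      (fun y hy => hup _ (T.min'_mem hne) y (mem_Icc.1 hy).1 (mem_Icc.1 hy).2)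
  have hcard : (#T : ℤ) = n + 1 - v₀ := by
    rw [hT, Int.card_Icc]
    omega
  rwa [hcard, sub_sub_cancel]

def columnHeight (A : Finset (ℤ × ℤ)) (u : ℤ) : ℕ := #(A.filter (·.1 = u))

lemma filter_fst_eq_of_isDyckPath {m n : ℕ} {A : Finset (ℤ × ℤ)} (hA : IsDyckPath m n A)
    (u : ℤ) : A.filter (·.1 = u) = {u} ×ˢ Icc ((n : ℤ) + 1 - columnHeight A u) n := by
  set T := (A.filter (·.1 = u)).image Prod.snd
  have hprod : A.filter (·.1 = u) = {u} ×ˢ T := by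
    ext ⟨x, y⟩
    simp only [T, mem_filter, mem_product, mem_singleton, mem_image, Prod.exists,
      exists_eq_right]
    constructor
    · rintro ⟨h, rfl⟩
      exact ⟨rfl, h⟩
    · rintro ⟨rfl, h⟩
      exact ⟨h, rfl⟩
  have hmem : ∀ v, v ∈ T ↔ (u, v) ∈ A := by
    intro v
    simp [T]
  have hT : T = Icc ((n : ℤ) + 1 - #T) n := by
    refine eq_Icc_of_upperClosed (fun v hv => ?_) (fun v hv y hvy hyn => ?_)
    · exact (mem_cells.1 (hA.1 ((hmem v).1 hv))).2.2.2
    · have hc := (hmem v).1 hv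
      exact (hmem y).2 (hA.2.2 _ hc u y (mem_cells.1 (hA.1 hc)).1 le_rfl hvy hyn)
  have hheight : columnHeight A u = #T := by
    rw [columnHeight, hprod, card_product, card_singleton, one_mul]
  rw [hheight, hprod, ← hT]

def twoColumnPath (n a b : ℕ) : Finset (ℤ × ℤ) :=
  {1} ×ˢ Icc ((n : ℤ) + 1 - a) n ∪ {2} ×ˢ Icc ((n : ℤ) + 1 - b) n

lemma mem_twoColumnPath {n a b : ℕ} {c : ℤ × ℤ} :
    c ∈ twoColumnPath n a b ↔ (c.1 = 1 ∧ (n : ℤ) + 1 - a ≤ c.2 ∧ c.2 ≤ n) ∨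
      (c.1 = 2 ∧ (n : ℤ) + 1 - b ≤ c.2 ∧ c.2 ≤ n) := by
  simp only [twoColumnPath, mem_union, mem_product, mem_singleton, mem_Icc]

lemma card_twoColumnPath (n a b : ℕ) : #(twoColumnPath n a b) = a + b := by
  rw [twoColumnPath, card_union_of_disjoint (disjoint_product.2 (Or.inl (by simp))),
    card_product, card_product, card_singleton, card_singleton, Int.card_Icc, Int.card_Icc]
  omega

lemma columnHeight_twoColumnPath_one (n a b : ℕ) : columnHeight (twoColumnPath n a b) 1 = a := by
  have h : (twoColumnPath n a b).filter (·.1 = 1) = {1} ×ˢ Icc ((n : ℤ) + 1 - a) n := by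
    ext ⟨u, v⟩
    simp only [mem_filter, mem_twoColumnPath, mem_product, mem_singleton, mem_Icc]
    omega
  rw [columnHeight, h, card_product, card_singleton, Int.card_Icc]
  omega

lemma columnHeight_twoColumnPath_two (n a b : ℕ) : columnHeight (twoColumnPath n a b) 2 = b := by
  have h : (twoColumnPath n a b).filter (·.1 = 2) = {2} ×ˢ Icc ((n : ℤ) + 1 - b) n := by
    ext ⟨u, v⟩
    simp only [mem_filter, mem_twoColumnPath, mem_product, mem_singleton, mem_Icc]
    omega
  rw [columnHeight, h, card_product, card_singleton, Int.card_Icc]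
  omega

lemma eq_twoColumnPath_of_isDyckPath {n : ℕ} {A : Finset (ℤ × ℤ)} (hA : IsDyckPath 3 n A) :
    A = twoColumnPath n (columnHeight A 1) (columnHeight A 2) := by
  have hcol : ∀ u v, (u, v) ∈ A ↔ v ∈ Icc ((n : ℤ) + 1 - columnHeight A u) n := by
    intro u v
    simpa using congrArg ((u, v) ∈ ·) (filter_fst_eq_of_isDyckPath hA u)
  ext ⟨u, v⟩
  rw [mem_twoColumnPath]
  constructor
  · intro h
    have hcell := mem_cells.1 (hA.1 h)
    have hdiag := hA.2.1 _ h
    simp only [Nat.cast_ofNat] at hcell hdiag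
    rw [hcol, mem_Icc] at h
    obtain ⟨hu1, hu3, -, hvn⟩ := hcell
    interval_cases u
    · exact Or.inl ⟨rfl, h⟩
    · exact Or.inr ⟨rfl, h⟩
    · omega
  · rintro (⟨rfl, hv⟩ | ⟨rfl, hv⟩) <;> exact (hcol _ v).2 (mem_Icc.2 hv)

lemma isDyckPath_twoColumnPath_iff {n a b : ℕ} (h3 : ¬ 3 ∣ n) :
    IsDyckPath 3 n (twoColumnPath n a b) ↔ b ≤ a ∧ a + n / 3 < n ∧ b ≤ n / 3 := by
  constructor
  · rintro ⟨-, hdiag, hclosed⟩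
    have top1 : 0 < a → ((1 : ℤ), (n : ℤ) + 1 - a) ∈ twoColumnPath n a b := fun _ =>
      mem_twoColumnPath.2 (Or.inl ⟨rfl, le_rfl, by omega⟩)
    have top2 : 0 < b → ((2 : ℤ), (n : ℤ) + 1 - b) ∈ twoColumnPath n a b := fun _ =>
      mem_twoColumnPath.2 (Or.inr ⟨rfl, le_rfl, by omega⟩)
    refine ⟨?_, ?_, ?_⟩
    · by_contra! hab
      have h := hclosed _ (top2 (by omega)) 1 _ le_rfl (by norm_num) le_rfl (by omega)
      rw [mem_twoColumnPath] at h
      omega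
    · rcases Nat.eq_zero_or_pos a with ha | ha
      · omega
      · have h := hdiag _ (top1 ha)
        simp only [Nat.cast_ofNat] at h
        omega
    · rcases Nat.eq_zero_or_pos b with hb | hb
      · omega
      · have h := hdiag _ (top2 hb)
        simp only [Nat.cast_ofNat] at h
        omega
  · rintro ⟨hba, ha, hb⟩
    refine ⟨fun c hc => ?_, fun c hc => ?_, fun c hc x y hx hxc hcy hyn => ?_⟩
    · rw [mem_cells]
      rw [mem_twoColumnPath] at hc
      push_cast
      omega
    · rw [mem_twoColumnPath] at hc
      simp only [Nat.cast_ofNat]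
      rcases hc with ⟨h1, hv⟩ | ⟨h1, hv⟩ <;> rw [h1] <;> omega
    · rw [mem_twoColumnPath] at hc ⊢
      omega

def positiveCells (m n : ℕ) : Finset (ℤ × ℤ) := (cells m n).filter fun c => 0 < rk m n c.1 c.2

lemma area_eq_of_isDyckPath {m n : ℕ} {A : Finset (ℤ × ℤ)} (hA : IsDyckPath m n A) :
    area m n A = #(positiveCells m n) - #A := by
  have hsdiff : areaSet m n A = positiveCells m n \ A := by
    ext c
    simp only [areaSet, positiveCells, mem_filter, mem_sdiff, and_assoc]
  have hsub : A ⊆ positiveCells m n := fun c hc =>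
    mem_filter.2 ⟨hA.1 hc, by unfold rk; linarith [hA.2.1 c hc]⟩
  rw [area, hsdiff, card_sdiff_of_subset hsub]

lemma card_positiveCells_three {n : ℕ} (h3 : ¬ 3 ∣ n) : #(positiveCells 3 n) = n - 1 := by
  have h : positiveCells 3 n =
      {1} ×ˢ Icc ((n / 3 : ℕ) + 2 : ℤ) n ∪ {2} ×ˢ Icc ((n : ℤ) - (n / 3 : ℕ) + 1) n := by
    ext ⟨u, v⟩
    rw [positiveCells, mem_filter, mem_cells, rk]
    simp only [mem_union, mem_product, mem_singleton, mem_Icc, Nat.cast_ofNat]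
    constructor
    · rintro ⟨⟨hu1, hu3, -, hvn⟩, hrk⟩
      interval_cases u <;> omega
    · rintro (⟨rfl, hv⟩ | ⟨rfl, hv⟩) <;> omega
  rw [h, card_union_of_disjoint (disjoint_product.2 (Or.inl (by simp))), card_product,
    card_product, card_singleton, card_singleton, Int.card_Icc, Int.card_Icc]
  omega

lemma area_twoColumnPath {n a b : ℕ} (h3 : ¬ 3 ∣ n)
    (hA : IsDyckPath 3 n (twoColumnPath n a b)) :
    area 3 n (twoColumnPath n a b) = n - 1 - a - b := by
  rw [area_eq_of_isDyckPath hA, card_positiveCells_three h3, card_twoColumnPath]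
  omega

section Dinv

variable {n a b : ℕ} {v : ℤ}

lemma armOf_twoColumnPath_one (hv : v ≤ n) :
    armOf (twoColumnPath n a b) (1, v) = if (n : ℤ) + 1 - b ≤ v then 1 else 0 := by
  split_ifs with h
  · rw [armOf, card_eq_one]
    refine ⟨(2, v), ?_⟩
    ext ⟨x, y⟩
    simp only [mem_filter, mem_twoColumnPath, mem_singleton, Prod.mk.injEq]
    omega
  · rw [armOf, card_eq_zero, filter_eq_empty_iff]
    rintro ⟨x, y⟩ hc
    rw [mem_twoColumnPath] at hc
    omega

lemma armOf_twoColumnPath_two : armOf (twoColumnPath n a b) (2, v) = 0 := by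
  rw [armOf, card_eq_zero, filter_eq_empty_iff]
  rintro ⟨x, y⟩ hc
  rw [mem_twoColumnPath] at hc
  omega

lemma legOf_twoColumnPath_one (hv : (n : ℤ) + 1 - a ≤ v ∧ v ≤ n) :
    (legOf (twoColumnPath n a b) (1, v) : ℤ) = v - (n + 1 - a) := by
  have h : (twoColumnPath n a b).filter (fun d => d.1 = 1 ∧ d.2 < v) =
      {1} ×ˢ Icc ((n : ℤ) + 1 - a) (v - 1) := by
    ext ⟨x, y⟩
    simp only [mem_filter, mem_twoColumnPath, mem_product, mem_singleton, mem_Icc]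
    omega
  rw [legOf, h, card_product, card_singleton, one_mul, Int.card_Icc]
  omega

lemma legOf_twoColumnPath_two (hv : (n : ℤ) + 1 - b ≤ v ∧ v ≤ n) :
    (legOf (twoColumnPath n a b) (2, v) : ℤ) = v - (n + 1 - b) := by
  have h : (twoColumnPath n a b).filter (fun d => d.1 = 2 ∧ d.2 < v) =
      {2} ×ˢ Icc ((n : ℤ) + 1 - b) (v - 1) := by
    ext ⟨x, y⟩
    simp only [mem_filter, mem_twoColumnPath, mem_product, mem_singleton, mem_Icc]
    omega
  rw [legOf, h, card_product, card_singleton, one_mul, Int.card_Icc]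
  omega

/-- The second column lies in `Dinv`; a first-column cell with leg `ℓ` lies in `Dinv` iff
`ℓ ≤ n / 3` when its arm is `0`, and iff `ℓ ≥ n / 3` when its arm is `1`. -/
lemma dinvSet_twoColumnPath (h3 : ¬ 3 ∣ n) (ha : a + n / 3 < n) (hb : b ≤ n / 3) :
    dinvSet 3 n (twoColumnPath n a b) = {2} ×ˢ Icc ((n : ℤ) + 1 - b) n ∪
      {1} ×ˢ (Icc ((n : ℤ) + 1 - a) (min ((n : ℤ) - b) ((n : ℤ) + 1 - a + (n / 3 : ℕ))) ∪
        Icc (max ((n : ℤ) + 1 - b) ((n : ℤ) + 1 - a + (n / 3 : ℕ))) n) := by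
  ext ⟨u, v⟩
  simp only [dinvSet, mem_filter, mem_union, mem_product, mem_singleton, mem_Icc]
  by_cases hP : (u, v) ∈ twoColumnPath n a b
  · simp only [hP, true_and, Nat.cast_ofNat]
    rcases mem_twoColumnPath.1 hP with ⟨rfl, hv⟩ | ⟨rfl, hv⟩ <;> dsimp only at hv
    · rw [armOf_twoColumnPath_one hv.2, legOf_twoColumnPath_one hv]
      split_ifs <;> push_cast <;>
        simp only [le_min_iff, max_le_iff, true_and, false_and, false_or] <;> omega
    · rw [armOf_twoColumnPath_two, legOf_twoColumnPath_two hv]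
      push_cast
      simp only [true_and, false_and, or_false]
      omega
  · simp only [hP, false_and, false_iff]
    simp only [mem_twoColumnPath] at hP
    omega

def dinvTwoColumn (n a b : ℕ) : ℕ := b + min (a - b) (n / 3 + 1) + (a - max (a - b) (n / 3))

lemma dinv_twoColumnPath (h3 : ¬ 3 ∣ n) (ha : a + n / 3 < n) (hb : b ≤ n / 3) :
    dinv 3 n (twoColumnPath n a b) = dinvTwoColumn n a b := by
  have hdisj : Disjoint (Icc ((n : ℤ) + 1 - a) (min ((n : ℤ) - b) ((n : ℤ) + 1 - a + (n / 3 : ℕ))))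
      (Icc (max ((n : ℤ) + 1 - b) ((n : ℤ) + 1 - a + (n / 3 : ℕ))) n) :=
    disjoint_left.2 fun v h1 h2 => by
      simp only [mem_Icc, le_min_iff, max_le_iff] at h1 h2
      omega
  rw [dinv, dinvSet_twoColumnPath h3 ha hb,
    card_union_of_disjoint (disjoint_product.2 (Or.inl (by simp))), card_product, card_product,
    card_singleton, card_singleton, card_union_of_disjoint hdisj, Int.card_Icc, Int.card_Icc,
    Int.card_Icc, dinvTwoColumn]
  omega

end Dinv

lemma twoColumnPath_injective (n : ℕ) :
    Function.Injective fun p : ℕ × ℕ => twoColumnPath n p.1 p.2 := fun p p' h =>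
  Prod.ext
    (by simpa only [columnHeight_twoColumnPath_one] using congrArg (columnHeight · 1) h)
    (by simpa only [columnHeight_twoColumnPath_two] using congrArg (columnHeight · 2) h)

def dyckParams (n : ℕ) : Finset (ℕ × ℕ) :=
  (range n ×ˢ range (n / 3 + 1)).filter fun p => p.2 ≤ p.1 ∧ p.1 + n / 3 < n

lemma mem_dyckParams {n : ℕ} {p : ℕ × ℕ} :
    p ∈ dyckParams n ↔ p.2 ≤ p.1 ∧ p.1 + n / 3 < n ∧ p.2 ≤ n / 3 := by
  simp only [dyckParams, mem_filter, mem_product, mem_range]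
  omega

lemma dyckPaths_three_eq_image {n : ℕ} (h3 : ¬ 3 ∣ n) :
    dyckPaths 3 n = (dyckParams n).image fun p => twoColumnPath n p.1 p.2 := by
  ext A
  simp only [dyckPaths, mem_filter, mem_powerset, mem_image]
  constructor
  · rintro ⟨-, hA⟩
    refine ⟨(columnHeight A 1, columnHeight A 2), ?_, (eq_twoColumnPath_of_isDyckPath hA).symm⟩
    rw [mem_dyckParams, ← isDyckPath_twoColumnPath_iff h3, ← eq_twoColumnPath_of_isDyckPath hA]
    exact hA
  · rintro ⟨p, hp, rfl⟩
    have hA := (isDyckPath_twoColumnPath_iff h3).2 (mem_dyckParams.1 hp)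
    exact ⟨hA.1, hA⟩

lemma cqt_three_eq_sum_dyckParams {n : ℕ} (h3 : ¬ 3 ∣ n) (q t : ℚ) :
    Cqt 3 n q t = ∑ p ∈ dyckParams n, q ^ dinvTwoColumn n p.1 p.2 * t ^ (n - 1 - p.1 - p.2) := by
  rw [Cqt, dyckPaths_three_eq_image h3, sum_image (twoColumnPath_injective n).injOn]
  refine sum_congr rfl fun p hp => ?_
  obtain ⟨hba, ha, hb⟩ := mem_dyckParams.1 hp
  rw [dinv_twoColumnPath h3 ha hb,
    area_twoColumnPath h3 ((isDyckPath_twoColumnPath_iff h3).2 ⟨hba, ha, hb⟩)]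

def pathStats (n : ℕ) (p : ℕ × ℕ) : ℕ × ℕ := (dinvTwoColumn n p.1 p.2, n - 1 - p.1 - p.2)

/-- Writing `k = n / 3`, `dinvTwoColumn n a b` is `a` if `a ≤ k`, `2a - k` if `a - b ≤ k ≤ a`
and `2b + k + 1` if `a - b > k`; the parity of `dinv - k` separates the last two regimes. -/
def pathOfStats (n : ℕ) (p : ℕ × ℕ) : ℕ × ℕ :=
  if p.1 ≤ n / 3 then (p.1, n - 1 - p.1 - p.2)
  else if (p.1 - n / 3) % 2 = 0 then ((p.1 + n / 3) / 2, n - 1 - p.1 - p.2 + (p.1 - n / 3) / 2)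
  else ((p.1 - n / 3 - 1) / 2 + n / 3 + 1 + (n - 1 - p.1 - p.2), (p.1 - n / 3 - 1) / 2)

def schurSupport (n : ℕ) : Finset (ℕ × ℕ) :=
  (range n ×ˢ range n).filter fun p =>
    p.1 + p.2 < n ∧ n - 1 - p.1 - p.2 ≤ min p.1 (min p.2 (n / 3))

lemma mem_schurSupport {n : ℕ} {p : ℕ × ℕ} :
    p ∈ schurSupport n ↔ p.1 + p.2 < n ∧ n - 1 - p.1 - p.2 ≤ min p.1 (min p.2 (n / 3)) := by
  simp only [schurSupport, mem_filter, mem_product, mem_range]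
  omega

lemma bijOn_pathStats {n : ℕ} (h3 : ¬ 3 ∣ n) :
    Set.BijOn (pathStats n) (dyckParams n) (schurSupport n) := by
  refine Set.InvOn.bijOn (f' := pathOfStats n) ⟨fun p hp => ?_, fun p hp => ?_⟩
    (fun p hp => ?_) (fun p hp => ?_)
  · obtain ⟨a, b⟩ := p
    have := mem_dyckParams.1 hp
    dsimp only [pathStats, pathOfStats, dinvTwoColumn] at this ⊢
    split_ifs <;> simp only [Prod.mk.injEq] <;> omega
  · obtain ⟨x, y⟩ := p
    have := mem_schurSupport.1 hp
    dsimp only [pathStats, pathOfStats, dinvTwoColumn] at this ⊢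
    split_ifs <;> simp only [Prod.mk.injEq] <;> omega
  · have := mem_dyckParams.1 hp
    rw [mem_coe, mem_schurSupport]
    simp only [pathStats, dinvTwoColumn]
    omega
  · have := mem_schurSupport.1 hp
    rw [mem_coe, mem_dyckParams]
    simp only [pathOfStats]
    split_ifs <;> omega

lemma schur2_eq_sum_antidiagonal {l₁ l₂ : ℕ} (h : l₂ ≤ l₁) (q t : ℚ) :
    schur2 l₁ l₂ q t =
      ∑ p ∈ (antidiagonal (l₁ + l₂)).filter (fun p => l₂ ≤ p.1 ∧ l₂ ≤ p.2), q ^ p.1 * t ^ p.2 := by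
  refine sum_nbij' (fun j => (l₂ + j, l₁ - j)) (fun p => p.1 - l₂) (fun j hj => ?_)
    (fun p hp => ?_) (fun j _ => by simp) (fun p hp => ?_) (fun _ _ => rfl)
  · simp only [mem_range] at hj
    simp only [mem_filter, HasAntidiagonal.mem_antidiagonal]
    omega
  · simp only [mem_filter, HasAntidiagonal.mem_antidiagonal] at hp
    simp only [mem_range]
    omega
  · simp only [mem_filter, HasAntidiagonal.mem_antidiagonal] at hp
    simp only [Prod.ext_iff]
    omega

lemma sum_schur2_eq_sum_schurSupport {n : ℕ} (h3 : ¬ 3 ∣ n) (q t : ℚ) :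
    ∑ i ∈ range (n / 3 + 1), schur2 (n - 1 - 2 * i) i q t =
      ∑ p ∈ schurSupport n, q ^ p.1 * t ^ p.2 := by
  have hmaps : ∀ p ∈ schurSupport n, n - 1 - p.1 - p.2 ∈ range (n / 3 + 1) := fun p hp => by
    have := mem_schurSupport.1 hp
    rw [mem_range]
    omega
  rw [← sum_fiberwise_of_maps_to hmaps]
  refine sum_congr rfl fun i hi => ?_
  rw [mem_range] at hi
  rw [schur2_eq_sum_antidiagonal (by omega)]
  refine sum_congr ?_ fun _ _ => rfl
  ext ⟨x, y⟩
  simp only [mem_filter, HasAntidiagonal.mem_antidiagonal, mem_schurSupport]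
  omega

end RationalDyck

open RationalDyck

theorem stmt13_general (n : ℕ) (h3 : ¬ (3 ∣ n)) :
    ∀ q t : ℚ,
      Cqt 3 n q t = ∑ i ∈ Finset.range (n / 3 + 1), schur2 (n - 1 - 2 * i) i q t := by
  intro q t
  have hstats := bijOn_pathStats h3
  rw [cqt_three_eq_sum_dyckParams h3, sum_schur2_eq_sum_schurSupport h3]
  exact sum_nbij (pathStats n) (fun p hp => hstats.mapsTo hp) hstats.injOn hstats.surjOn
    fun _ _ => rfl

/-- For `n > 1` not divisible by `3`,
`C_{3,n}(q,t) = Σ_{i=0}^{⌊n/3⌋} s_{(n−1−2i, i)}(q,t)`. -/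
theorem stmt13 (n : ℕ) (hn : 1 < n) (h3 : ¬ (3 ∣ n)) :
    ∀ q t : ℚ,
      Cqt 3 n q t = ∑ i ∈ Finset.range (n / 3 + 1), schur2 (n - 1 - 2 * i) i q t :=
  stmt13_general n h3

end
end

section
/- Let n > 1 be an integer not divisible by 3 and let π be a (3,n)-Dyck path. Any cell (1,v) in the first column that is above π and lies in Skips(π) satisfies either: arm(1,v) = 1 and leg(1,v) < n/3 − 1, or arm(1,v) = 0 and leg(1,v) > n/3. -/
open scoped Classical

noncomputable section

/-! Scaled by `n` (resp. `m`), the arm (resp. leg) of a cell above an `(m,n)`-Dyck path is less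
than the distance `m (v-1) - u n` from its lower right corner `(u, v-1)` to the diagonal, because
every cell of the arm or leg lies above the diagonal as well. In a `(3,n)`-diagram this forces
`arm(1,v) ≤ 1` and `3 leg(1,v) ≤ 2n - 4`; as `3 ∤ n`, the inequalities defining `Skips` are
strict, and only the two cases of the theorem survive. -/

theorem Finset.mul_card_lt_of_forall_pos_mul_lt {S : Finset ℤ} {k b : ℤ} (hk : 0 ≤ k)
    (hb : 0 < b) (hS : ∀ y ∈ S, 0 < y ∧ k * y < b) : k * (S.card : ℤ) < b := by
  rcases S.eq_empty_or_nonempty with rfl | hne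
  · simpa using hb
  have hsub : S ⊆ Finset.Ioc 0 (S.max' hne) := fun y hy =>
    Finset.mem_Ioc.mpr ⟨(hS y hy).1, S.le_max' y hy⟩
  have hcard : (S.card : ℤ) ≤ S.max' hne := by
    have := Finset.card_le_card hsub
    have hM := (hS _ (S.max'_mem hne)).1
    rw [Int.card_Ioc, sub_zero] at this
    omega
  calc k * (S.card : ℤ) ≤ k * S.max' hne := mul_le_mul_of_nonneg_left hcard hk
    _ < b := (hS _ (S.max'_mem hne)).2

section DyckPath

variable {m n : ℕ} {A : Finset (ℤ × ℤ)}

theorem IsDyckPath.mul_armOf_lt (hA : IsDyckPath m n A) {c : ℤ × ℤ} (hc : c ∈ A) :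
    (n : ℤ) * armOf A c < (c.2 - 1) * m - c.1 * n := by
  have hinj : Set.InjOn (fun d : ℤ × ℤ => d.1 - c.1) (A.filter fun d => d.2 = c.2 ∧ c.1 < d.1) :=
    fun d hd e he hde => by
      simp only [Finset.mem_coe, Finset.mem_filter] at hd he
      exact Prod.ext (by simpa using hde) (hd.2.1.trans he.2.1.symm)
  rw [armOf, ← Finset.card_image_of_injOn hinj]
  refine Finset.mul_card_lt_of_forall_pos_mul_lt (by positivity) (hA.2.1 c hc) ?_
  simp only [Finset.mem_image, Finset.mem_filter]
  rintro _ ⟨d, ⟨hdA, hd2, hd1⟩, rfl⟩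
  have := hA.2.1 d hdA
  rw [hd2] at this
  constructor <;> nlinarith

theorem IsDyckPath.mul_legOf_lt (hA : IsDyckPath m n A) {c : ℤ × ℤ} (hc : c ∈ A) :
    (m : ℤ) * legOf A c < (c.2 - 1) * m - c.1 * n := by
  have hinj : Set.InjOn (fun d : ℤ × ℤ => c.2 - d.2) (A.filter fun d => d.1 = c.1 ∧ d.2 < c.2) :=
    fun d hd e he hde => by
      simp only [Finset.mem_coe, Finset.mem_filter] at hd he
      exact Prod.ext (hd.2.1.trans he.2.1.symm) (by simpa using hde)
  rw [legOf, ← Finset.card_image_of_injOn hinj]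
  refine Finset.mul_card_lt_of_forall_pos_mul_lt (by positivity) (hA.2.1 c hc) ?_
  simp only [Finset.mem_image, Finset.mem_filter]
  rintro _ ⟨d, ⟨hdA, hd1, hd2⟩, rfl⟩
  have := hA.2.1 d hdA
  rw [hd1] at this
  constructor <;> nlinarith

theorem mem_skipsSet_iff {c : ℤ × ℤ} :
    c ∈ skipsSet m n A ↔ c ∈ A ∧
      ((m : ℤ) * (legOf A c + 1) ≤ armOf A c * n ∨ (n : ℤ) * (armOf A c + 1) ≤ m * legOf A c) := by
  simp only [skipsSet, dinvSet, Finset.mem_filter, not_and_or, not_lt]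
  tauto

end DyckPath

theorem stmt15_general (n : ℕ) (h3 : ¬ (3 ∣ n))
    (A : Finset (ℤ × ℤ)) (hA : IsDyckPath 3 n A) (v : ℤ)
    (hskip : ((1 : ℤ), v) ∈ skipsSet 3 n A) :
    (armOf A (1, v) = 1 ∧ (legOf A (1, v) : ℚ) < (n : ℚ) / 3 - 1) ∨
    (armOf A (1, v) = 0 ∧ (n : ℚ) / 3 < (legOf A (1, v) : ℚ)) := by
  obtain ⟨hv, hskip⟩ := mem_skipsSet_iff.mp hskip
  have hvn : v ≤ n := (Finset.mem_Icc.mp (Finset.mem_product.mp (hA.1 hv)).2).2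
  have harm := hA.mul_armOf_lt hv
  have hleg := hA.mul_legOf_lt hv
  simp only [Nat.cast_ofNat] at harm hleg hskip
  set a := armOf A (1, v)
  set l := legOf A (1, v)
  have ha : a ≤ 1 := by
    by_contra! h
    have : (n : ℤ) * 2 ≤ n * a := mul_le_mul_of_nonneg_left (by exact_mod_cast h) (by positivity)
    omega
  interval_cases a
  · right
    refine ⟨rfl, ?_⟩
    rw [div_lt_iff₀ three_pos]
    exact_mod_cast (by omega : n < l * 3)
  · left
    refine ⟨rfl, ?_⟩
    rw [lt_sub_iff_add_lt, lt_div_iff₀ three_pos]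
    exact_mod_cast (by omega : (l + 1) * 3 < n)

/-- Any cell `(1,v)` of the first column above a `(3,n)`-Dyck path `π` lying in `Skips(π)`
satisfies either `arm(1,v) = 1` and `leg(1,v) < n/3 − 1`, or `arm(1,v) = 0` and
`leg(1,v) > n/3`. -/
theorem stmt15 (n : ℕ) (hn : 1 < n) (h3 : ¬ (3 ∣ n))
    (A : Finset (ℤ × ℤ)) (hA : IsDyckPath 3 n A) (v : ℤ)
    (hv : ((1 : ℤ), v) ∈ A) (hskip : ((1 : ℤ), v) ∈ skipsSet 3 n A) :
    (armOf A (1, v) = 1 ∧ (legOf A (1, v) : ℚ) < (n : ℚ) / 3 - 1) ∨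
    (armOf A (1, v) = 0 ∧ (n : ℚ) / 3 < (legOf A (1, v) : ℚ)) :=
  stmt15_general n h3 A hA v hskip
end
end

section
/- Let n > 1 be an integer not divisible by 3. There exists a bijection τ from the set of (3,n)-Dyck paths to itself such that for every (3,n)-Dyck path π: area(τ(π)) = dinv(π), dinv(τ(π)) = area(π), and skips(τ(π)) = skips(π). -/
open scoped Classical

noncomputable section

/-!
A `(3,n)`-Dyck path has no cells above it in the third column, so it is determined by the
heights `a ≥ b` of its first two columns, subject to `3a < 2n` and `3b < n`. For such a path
`area = n - 1 - a - b`, as there are `n - 1` cells of positive rank; `skips = S(a,b)` for an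
explicit piecewise-linear `S`; and `dinv = a + b - S(a,b)`, since every cell above the path is
in exactly one of `Dinv` and `Skips`. The bijection is induced by a piecewise-linear involution
of the admissible pairs that preserves `S` and replaces `a + b` by `n - 1 - a - b + S`, which
exchanges area and dinv.
-/

open Finset

namespace RationalDyck

section GeneralSlope

variable {m n : ℕ} {A : Finset (ℤ × ℤ)}

lemma skipsSet_eq_sdiff (m n : ℕ) (A : Finset (ℤ × ℤ)) :
    skipsSet m n A = A \ dinvSet m n A :=
  (sdiff_eq_filter _ _).symm

lemma dinv_add_skips (m n : ℕ) (A : Finset (ℤ × ℤ)) : dinv m n A + skips m n A = #A := by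
  rw [dinv, skips, skipsSet_eq_sdiff, add_comm]
  exact card_sdiff_add_card_eq_card (filter_subset _ _)

lemma rk_eq (m n : ℕ) (u v : ℤ) : rk m n u v = (v - 1) * m - u * n := by
  rw [rk]; ring

lemma area_add_card (hA : IsDyckPath m n A) :
    area m n A + #A = #{c ∈ cells m n | 0 < rk m n c.1 c.2} := by
  have hsub : A ⊆ {c ∈ cells m n | 0 < rk m n c.1 c.2} := fun c hc =>
    mem_filter.2 ⟨hA.1 hc, by rw [rk_eq]; linarith [hA.2.1 c hc]⟩
  rw [area, areaSet, ← filter_filter, ← sdiff_eq_filter]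
  exact card_sdiff_add_card_eq_card hsub

def column (A : Finset (ℤ × ℤ)) (u : ℤ) : Finset ℤ :=
  {c ∈ A | c.1 = u}.image Prod.snd

lemma mem_column {u v : ℤ} : v ∈ column A u ↔ (u, v) ∈ A := by
  simp [column]

lemma eq_Icc_of_upward_closed {S : Finset ℤ} {N : ℤ} (hle : ∀ v ∈ S, v ≤ N)
    (hcl : ∀ v ∈ S, ∀ w, v ≤ w → w ≤ N → w ∈ S) :
    S = Icc (N + 1 - #S) N := by
  rcases S.eq_empty_or_nonempty with rfl | hS
  · simp
  · have hS_eq : S = Icc (S.min' hS) N := by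
      ext v
      rw [mem_Icc]
      exact ⟨fun hv => ⟨S.min'_le v hv, hle v hv⟩,
        fun hv => hcl _ (S.min'_mem hS) v hv.1 hv.2⟩
    have hmin := hle _ (S.min'_mem hS)
    rw [hS_eq, Int.card_Icc]
    congr 1
    omega

lemma column_eq_Icc (hA : IsDyckPath m n A) {u : ℤ} (hu : 1 ≤ u) :
    column A u = Icc ((n : ℤ) + 1 - #(column A u)) n := by
  refine eq_Icc_of_upward_closed (fun v hv => ?_) (fun v hv w hvw hwn => ?_)
  · exact (mem_product.1 (hA.1 (mem_column.1 hv))).2 |> mem_Icc.1 |>.2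
  · exact mem_column.2 (hA.2.2 _ (mem_column.1 hv) u w hu le_rfl hvw hwn)

end GeneralSlope

section SlopeThree

variable {n : ℕ} {p : ℤ × ℤ} {A : Finset (ℤ × ℤ)}

def ValidHeights (n : ℕ) (p : ℤ × ℤ) : Prop :=
  0 ≤ p.2 ∧ p.2 ≤ p.1 ∧ 3 * p.1 < 2 * (n : ℤ) ∧ 3 * p.2 < n

def pathOfHeights (n : ℕ) (p : ℤ × ℤ) : Finset (ℤ × ℤ) :=
  {1} ×ˢ Icc ((n : ℤ) + 1 - p.1) n ∪ {2} ×ˢ Icc ((n : ℤ) + 1 - p.2) n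

def heights (A : Finset (ℤ × ℤ)) : ℤ × ℤ :=
  (#(column A 1), #(column A 2))

lemma mem_pathOfHeights {c : ℤ × ℤ} :
    c ∈ pathOfHeights n p ↔ (c.1 = 1 ∧ (n : ℤ) + 1 - p.1 ≤ c.2 ∧ c.2 ≤ n) ∨
      (c.1 = 2 ∧ (n : ℤ) + 1 - p.2 ≤ c.2 ∧ c.2 ≤ n) := by
  simp only [pathOfHeights, mem_union, mem_product, mem_singleton, mem_Icc]

lemma isDyckPath_pathOfHeights (hp : ValidHeights n p) :
    IsDyckPath 3 n (pathOfHeights n p) := by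
  obtain ⟨h1, h2, h3, h4⟩ := hp
  refine ⟨fun c hc => ?_, fun c hc => ?_, fun c hc x y hx hxc hcy hyn => ?_⟩
  · simp only [cells, mem_product, mem_Icc]
    rcases mem_pathOfHeights.1 hc with ⟨hu, _⟩ | ⟨hu, _⟩ <;> omega
  · rcases mem_pathOfHeights.1 hc with ⟨hu, _⟩ | ⟨hu, _⟩ <;> rw [hu] <;> push_cast <;>
      omega
  · rw [mem_pathOfHeights]
    rcases mem_pathOfHeights.1 hc with ⟨hu, _⟩ | ⟨hu, _⟩ <;> omega

lemma column_pathOfHeights_one : column (pathOfHeights n p) 1 = Icc ((n : ℤ) + 1 - p.1) n := by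
  ext v
  rw [mem_column, mem_pathOfHeights, mem_Icc]
  omega

lemma column_pathOfHeights_two : column (pathOfHeights n p) 2 = Icc ((n : ℤ) + 1 - p.2) n := by
  ext v
  rw [mem_column, mem_pathOfHeights, mem_Icc]
  omega

lemma heights_pathOfHeights (hp : ValidHeights n p) : heights (pathOfHeights n p) = p := by
  obtain ⟨h1, h2, -, -⟩ := hp
  rw [heights, column_pathOfHeights_one, column_pathOfHeights_two, Int.card_Icc, Int.card_Icc]
  ext <;> dsimp only <;> omega

lemma notMem_of_three_le (hA : IsDyckPath 3 n A) {c : ℤ × ℤ} (hc : 3 ≤ c.1) : c ∉ A := by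
  intro hcA
  have hdiag := hA.2.1 c hcA
  have hcell := mem_product.1 (hA.1 hcA)
  simp only [mem_Icc] at hcell
  push_cast at hdiag
  nlinarith

lemma pathOfHeights_heights (hA : IsDyckPath 3 n A) : pathOfHeights n (heights A) = A := by
  have h1 := column_eq_Icc hA le_rfl
  have h2 := column_eq_Icc hA (u := 2) (by norm_num)
  ext ⟨u, v⟩
  rw [mem_pathOfHeights]
  simp only [heights]
  constructor
  · rintro (⟨rfl, hv⟩ | ⟨rfl, hv⟩)
    · rw [← mem_column, h1, mem_Icc]; exact hv
    · rw [← mem_column, h2, mem_Icc]; exact hv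
  · intro huv
    have hcell := mem_product.1 (hA.1 huv)
    simp only [mem_Icc] at hcell
    have hu3 : u < 3 := not_le.1 fun h => notMem_of_three_le hA h huv
    rcases (by omega : u = 1 ∨ u = 2) with rfl | rfl
    · rw [← mem_column, h1, mem_Icc] at huv; exact Or.inl ⟨rfl, huv⟩
    · rw [← mem_column, h2, mem_Icc] at huv; exact Or.inr ⟨rfl, huv⟩

lemma validHeights_heights (hn : 0 < n) (hA : IsDyckPath 3 n A) :
    ValidHeights n (heights A) := by
  have h1 := column_eq_Icc hA le_rfl
  have h2 := column_eq_Icc hA (u := 2) (by norm_num)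
  have hdiag : ∀ u : ℤ, 1 ≤ u → 0 < #(column A u) →
      0 < ((n : ℤ) - #(column A u)) * 3 - u * n := by
    intro u hu hpos
    have hlow : (n : ℤ) + 1 - #(column A u) ∈ Icc ((n : ℤ) + 1 - #(column A u)) n := by
      rw [mem_Icc]
      omega
    rw [← column_eq_Icc hA hu] at hlow
    have := hA.2.1 _ (mem_column.1 hlow)
    push_cast at this
    linarith
  have hsub : column A 2 ⊆ column A 1 := fun v hv =>
    mem_column.2 (hA.2.2 _ (mem_column.1 hv) 1 v le_rfl (by norm_num) le_rfl
      ((mem_Icc.1 (h2 ▸ hv)).2))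
  have hle := card_le_card hsub
  have hd1 := hdiag 1 le_rfl
  have hd2 := hdiag 2 (by norm_num)
  refine ⟨by simp [heights], by simpa [heights] using hle, ?_, ?_⟩ <;> simp only [heights] <;>
    omega

def heightsEquiv (hn : 0 < n) : {p // ValidHeights n p} ≃ {A // IsDyckPath 3 n A} where
  toFun p := ⟨pathOfHeights n p, isDyckPath_pathOfHeights p.2⟩
  invFun A := ⟨heights A, validHeights_heights hn A.2⟩
  left_inv p := Subtype.ext (heights_pathOfHeights p.2)
  right_inv A := Subtype.ext (pathOfHeights_heights A.2)

lemma armOf_pathOfHeights_one (v : ℤ) :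
    armOf (pathOfHeights n p) (1, v) = if (n : ℤ) + 1 - p.2 ≤ v ∧ v ≤ n then 1 else 0 := by
  have : {d ∈ pathOfHeights n p | d.2 = v ∧ 1 < d.1} =
      if (n : ℤ) + 1 - p.2 ≤ v ∧ v ≤ n then {(2, v)} else ∅ := by
    ext ⟨x, y⟩
    simp only [mem_filter, mem_pathOfHeights]
    split_ifs <;> simp only [mem_singleton, Prod.mk.injEq, notMem_empty, iff_false] <;> omega
  rw [armOf, this]
  split_ifs <;> rfl

lemma armOf_pathOfHeights_two (v : ℤ) : armOf (pathOfHeights n p) (2, v) = 0 := by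
  rw [armOf, card_eq_zero, filter_eq_empty_iff]
  intro c hc
  rw [mem_pathOfHeights] at hc
  omega

lemma legOf_pathOfHeights_one {v : ℤ} (hv : v ≤ n + 1) :
    legOf (pathOfHeights n p) (1, v) = (v - (n + 1 - p.1)).toNat := by
  have : {d ∈ pathOfHeights n p | d.1 = 1 ∧ d.2 < v} =
      {1} ×ˢ Icc ((n : ℤ) + 1 - p.1) (v - 1) := by
    ext ⟨x, y⟩
    simp only [mem_filter, mem_pathOfHeights, mem_product, mem_singleton, mem_Icc]
    omega
  rw [legOf, this, card_product, card_singleton, one_mul, Int.card_Icc]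
  congr 1
  omega

lemma legOf_pathOfHeights_two {v : ℤ} (hv : v ≤ n + 1) :
    legOf (pathOfHeights n p) (2, v) = (v - (n + 1 - p.2)).toNat := by
  have : {d ∈ pathOfHeights n p | d.1 = 2 ∧ d.2 < v} =
      {2} ×ˢ Icc ((n : ℤ) + 1 - p.2) (v - 1) := by
    ext ⟨x, y⟩
    simp only [mem_filter, mem_pathOfHeights, mem_product, mem_singleton, mem_Icc]
    omega
  rw [legOf, this, card_product, card_singleton, one_mul, Int.card_Icc]
  congr 1
  omega

/- Only cells of the first column can be skips: those with arm `0` and leg `> n/3` (first term)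
and those with arm `1` and leg `< n/3` (second term). -/
def skipsOfHeights (n : ℕ) (p : ℤ × ℤ) : ℤ :=
  max 0 (p.1 - p.2 - n / 3 - 1) + max 0 (min p.2 (p.2 + n / 3 - p.1))

lemma skipsSet_pathOfHeights (hn : (n : ℤ) % 3 ≠ 0) (hp : ValidHeights n p) :
    skipsSet 3 n (pathOfHeights n p) = {1} ×ˢ (Icc ((n : ℤ) + 2 + n / 3 - p.1) (n - p.2) ∪
      Icc ((n : ℤ) + 1 - p.2) (min n (n + n / 3 - p.1))) := by
  obtain ⟨h1, h2, h3, h4⟩ := hp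
  ext ⟨u, v⟩
  simp only [skipsSet_eq_sdiff, dinvSet, mem_sdiff, mem_filter, mem_product, mem_singleton,
    mem_union, mem_Icc, le_min_iff]
  rw [mem_pathOfHeights]
  by_cases hv : v ≤ n + 1
  · rcases (by omega : u = 1 ∨ u = 2 ∨ (u ≠ 1 ∧ u ≠ 2)) with rfl | rfl | hu
    · rw [armOf_pathOfHeights_one, legOf_pathOfHeights_one hv]
      split_ifs <;> push_cast <;> simp only [false_and, true_and, or_false] <;> omega
    · rw [armOf_pathOfHeights_two, legOf_pathOfHeights_two hv]
      push_cast
      simp only [false_and, true_and, false_or, iff_false]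
      omega
    · omega
  · omega

lemma skips_pathOfHeights (hn : (n : ℤ) % 3 ≠ 0) (hp : ValidHeights n p) :
    (skips 3 n (pathOfHeights n p) : ℤ) = skipsOfHeights n p := by
  have hdisj : Disjoint (Icc ((n : ℤ) + 2 + n / 3 - p.1) (n - p.2))
      (Icc ((n : ℤ) + 1 - p.2) (min n (n + n / 3 - p.1))) := by
    rw [disjoint_left]
    intro v hv hv'
    rw [mem_Icc] at hv hv'
    omega
  rw [skips, skipsSet_pathOfHeights hn hp, card_product, card_singleton, one_mul,
    card_union_of_disjoint hdisj, Int.card_Icc, Int.card_Icc, skipsOfHeights]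
  push_cast
  omega

lemma card_pathOfHeights (hp : ValidHeights n p) : (#(pathOfHeights n p) : ℤ) = p.1 + p.2 := by
  have hdisj : Disjoint (({1} : Finset ℤ) ×ˢ Icc ((n : ℤ) + 1 - p.1) n)
      ({2} ×ˢ Icc ((n : ℤ) + 1 - p.2) n) :=
    disjoint_product.2 (Or.inl (by simp))
  rw [pathOfHeights, card_union_of_disjoint hdisj, card_product, card_product, card_singleton,
    card_singleton, one_mul, one_mul, Int.card_Icc, Int.card_Icc]
  obtain ⟨h1, h2, -, -⟩ := hp
  omega

lemma dinv_pathOfHeights (hn : (n : ℤ) % 3 ≠ 0) (hp : ValidHeights n p) :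
    (dinv 3 n (pathOfHeights n p) : ℤ) = p.1 + p.2 - skipsOfHeights n p := by
  have := dinv_add_skips 3 n (pathOfHeights n p)
  have := skips_pathOfHeights hn hp
  have := card_pathOfHeights hp
  omega

lemma posRankCells_three (hn : (n : ℤ) % 3 ≠ 0) :
    {c ∈ cells 3 n | 0 < rk 3 n c.1 c.2} =
      {1} ×ˢ Icc ((n : ℤ) / 3 + 2) n ∪ {2} ×ˢ Icc ((n : ℤ) + 1 - n / 3) n := by
  ext ⟨u, v⟩
  simp only [cells, rk_eq, mem_filter, mem_product, mem_union, mem_singleton, mem_Icc]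
  push_cast
  constructor
  · rintro ⟨⟨⟨hu1, hu3⟩, hv1, hvn⟩, hrk⟩
    rcases (by omega : u = 1 ∨ u = 2 ∨ u = 3) with rfl | rfl | rfl <;> omega
  · rintro (⟨rfl, hv⟩ | ⟨rfl, hv⟩) <;> omega

lemma card_posRankCells_three (hn : (n : ℤ) % 3 ≠ 0) :
    (#{c ∈ cells 3 n | 0 < rk 3 n c.1 c.2} : ℤ) = n - 1 := by
  have hdisj : Disjoint (({1} : Finset ℤ) ×ˢ Icc ((n : ℤ) / 3 + 2) n)
      ({2} ×ˢ Icc ((n : ℤ) + 1 - n / 3) n) :=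
    disjoint_product.2 (Or.inl (by simp))
  rw [posRankCells_three hn, card_union_of_disjoint hdisj, card_product, card_product,
    card_singleton, card_singleton, one_mul, one_mul, Int.card_Icc, Int.card_Icc]
  omega

lemma area_pathOfHeights (hn : (n : ℤ) % 3 ≠ 0) (hp : ValidHeights n p) :
    (area 3 n (pathOfHeights n p) : ℤ) = n - 1 - p.1 - p.2 := by
  have := area_add_card (isDyckPath_pathOfHeights hp)
  have := card_posRankCells_three hn
  have := card_pathOfHeights hp
  omega

def swapHeights (n : ℕ) (p : ℤ × ℤ) : ℤ × ℤ :=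
  let k : ℤ := n / 3
  let d := n - 1 - p.1 - p.2
  let s := skipsOfHeights n p
  if d ≤ k then (d, s)
  else if (d - k) % 2 = 1 then ((d - k - 1) / 2 + k + 1 + s, (d - k - 1) / 2)
  else ((d + k) / 2, (d - k) / 2 + s)

lemma validHeights_swapHeights (hn : (n : ℤ) % 3 ≠ 0) (hp : ValidHeights n p) :
    ValidHeights n (swapHeights n p) := by
  obtain ⟨a, b⟩ := p
  obtain ⟨h1, h2, h3, h4⟩ := hp
  simp only [ValidHeights, swapHeights, skipsOfHeights] at *
  split_ifs <;> omega

lemma swapHeights_fst_add_snd (hp : ValidHeights n p) :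
    (swapHeights n p).1 + (swapHeights n p).2 = n - 1 - p.1 - p.2 + skipsOfHeights n p := by
  obtain ⟨a, b⟩ := p
  obtain ⟨h1, h2, h3, h4⟩ := hp
  simp only [swapHeights, skipsOfHeights] at *
  split_ifs <;> omega

lemma skipsOfHeights_swapHeights (hp : ValidHeights n p) :
    skipsOfHeights n (swapHeights n p) = skipsOfHeights n p := by
  obtain ⟨a, b⟩ := p
  obtain ⟨h1, h2, h3, h4⟩ := hp
  simp only [swapHeights, skipsOfHeights] at *
  split_ifs <;> omega

lemma swapHeights_swapHeights (hp : ValidHeights n p) :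
    swapHeights n (swapHeights n p) = p := by
  have hsum := swapHeights_fst_add_snd hp
  have hs := skipsOfHeights_swapHeights hp
  set q := swapHeights n p
  obtain ⟨a, b⟩ := p
  obtain ⟨h1, h2, h3, h4⟩ := hp
  unfold swapHeights
  rw [hs]
  simp only [skipsOfHeights] at hsum ⊢
  split_ifs <;> simp only [Prod.mk.injEq] <;> omega

def swapPerm (hn : (n : ℤ) % 3 ≠ 0) : Equiv.Perm {p // ValidHeights n p} :=
  Function.Involutive.toPerm (fun p => ⟨swapHeights n p, validHeights_swapHeights hn p.2⟩)
    fun p => Subtype.ext (swapHeights_swapHeights p.2)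

lemma area_pathOfHeights_swapHeights (hn : (n : ℤ) % 3 ≠ 0) (hp : ValidHeights n p) :
    area 3 n (pathOfHeights n (swapHeights n p)) = dinv 3 n (pathOfHeights n p) := by
  have := area_pathOfHeights hn (validHeights_swapHeights hn hp)
  have := dinv_pathOfHeights hn hp
  have := swapHeights_fst_add_snd (n := n) hp
  omega

lemma dinv_pathOfHeights_swapHeights (hn : (n : ℤ) % 3 ≠ 0) (hp : ValidHeights n p) :
    dinv 3 n (pathOfHeights n (swapHeights n p)) = area 3 n (pathOfHeights n p) := by
  have := dinv_pathOfHeights hn (validHeights_swapHeights hn hp)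
  have := area_pathOfHeights hn hp
  have := swapHeights_fst_add_snd (n := n) hp
  have := skipsOfHeights_swapHeights (n := n) hp
  omega

lemma skips_pathOfHeights_swapHeights (hn : (n : ℤ) % 3 ≠ 0) (hp : ValidHeights n p) :
    skips 3 n (pathOfHeights n (swapHeights n p)) = skips 3 n (pathOfHeights n p) := by
  have := skips_pathOfHeights hn (validHeights_swapHeights hn hp)
  have := skips_pathOfHeights hn hp
  have := skipsOfHeights_swapHeights (n := n) hp
  omega

end SlopeThree

end RationalDyck

theorem stmt19_general (n : ℕ) (h3 : ¬ (3 ∣ n)) :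
    ∃ τ : {A : Finset (ℤ × ℤ) // IsDyckPath 3 n A} ≃
          {A : Finset (ℤ × ℤ) // IsDyckPath 3 n A},
      ∀ A, area 3 n (τ A).1 = dinv 3 n A.1 ∧ dinv 3 n (τ A).1 = area 3 n A.1 ∧
        skips 3 n (τ A).1 = skips 3 n A.1 := by
  have hn3 : (n : ℤ) % 3 ≠ 0 := by omega
  let e := RationalDyck.heightsEquiv (n := n) (by omega)
  refine ⟨e.permCongr (RationalDyck.swapPerm hn3), fun A => ?_⟩
  obtain ⟨⟨p, hp⟩, rfl⟩ := e.surjective A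
  rw [Equiv.permCongr_apply, Equiv.symm_apply_apply]
  exact ⟨RationalDyck.area_pathOfHeights_swapHeights hn3 hp,
    RationalDyck.dinv_pathOfHeights_swapHeights hn3 hp,
    RationalDyck.skips_pathOfHeights_swapHeights hn3 hp⟩

/-- There is a bijection `τ` on the set of `(3,n)`-Dyck paths exchanging `area` and `dinv`
while preserving `skips`. -/
theorem stmt19 (n : ℕ) (hn : 1 < n) (h3 : ¬ (3 ∣ n)) :
    ∃ τ : {A : Finset (ℤ × ℤ) // IsDyckPath 3 n A} ≃
          {A : Finset (ℤ × ℤ) // IsDyckPath 3 n A},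
      ∀ A, area 3 n (τ A).1 = dinv 3 n A.1 ∧ dinv 3 n (τ A).1 = area 3 n A.1 ∧
        skips 3 n (τ A).1 = skips 3 n A.1 :=
  stmt19_general n h3
end
end
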